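/- arXiv:1604.00892 — 6 statements merged into one kernel-verified Lean document; each statement's English description precedes it below -/
import Mathlib

section
/- Let G be a group generated by a finite symmetric set S, with word length |·|_G. For every ε > 0 there exists a finite constant C_ε such that the following holds: if (p_g)_{g ∈ G, g ≠ e} is any family of values in [0,1], then Σ_{g ≠ e} [ -p_g log p_g - (1-p_g) log(1-p_g) ] ≤ C_ε · Σ_{g ≠ e} |g|_G · p_g + ε, where 0 log 0 := 0 and both sums are allowed to take the value +∞. -/
/-!
Legendre duality for `q ↦ q log q` gives `-p log p ≤ a p + e^{-1-a}` for every `a`, and `a = -1`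
gives `-(1-p) log (1-p) ≤ p`. Taking `a = 2 |g| log (1/x)` for a small `x ∈ (0, 1]` bounds the
binary entropy of `p_g` by `(1 + 2 log (1/x)) |g| p_g + x^{|g|+1}`, using `|g| ≥ 1` for `g ≠ e`.
Choosing a geodesic word for each `g` embeds `G` into the words over `S`, so
`∑_g x^{|g|} ≤ ∑_n (|S| x)^n ≤ 2` once `|S| x ≤ 1/2`, and the error term is at most `2x ≤ ε`.
-/

open scoped ENNReal

/-- The word length of `g` with respect to the generating set `S`:
the least `n` such that `g` is a product of `n` elements of `S` (with `|e| = 0`). -/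
noncomputable def wordLength {G : Type*} [Group G] (S : Set G) (g : G) : ℕ :=
  sInf {n | ∃ l : List G, l.length = n ∧ (∀ s ∈ l, s ∈ S) ∧ l.prod = g}

namespace Real

lemma negMulLog_le_mul_add_exp (a : ℝ) {q : ℝ} (hq : 0 ≤ q) :
    negMulLog q ≤ a * q + exp (-1 - a) := by
  rcases hq.eq_or_lt with rfl | hq
  · simpa using (exp_pos _).le
  · have h := one_sub_inv_le_log_of_pos (div_pos hq (exp_pos (-1 - a)))
    rw [log_div hq.ne' (exp_pos _).ne', log_exp, inv_div] at h
    have h' := mul_le_mul_of_nonneg_left h hq.le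
    rw [mul_sub, mul_one, mul_div_cancel₀ _ hq.ne'] at h'
    rw [negMulLog]
    linarith

lemma binEntropy_le_mul_add_exp (a : ℝ) {p : ℝ} (hp₀ : 0 ≤ p) (hp₁ : p ≤ 1) :
    binEntropy p ≤ (a + 1) * p + exp (-1 - a) := by
  have h := negMulLog_le_mul_add_exp a hp₀
  have h' := negMulLog_le_mul_add_exp (-1) (sub_nonneg.2 hp₁)
  rw [binEntropy_eq_negMulLog_add_negMulLog_one_sub]
  norm_num at h'
  linarith

lemma binEntropy_le_mul_add_pow_succ {p x : ℝ} {n : ℕ} (hp₀ : 0 ≤ p) (hp₁ : p ≤ 1) (hx₀ : 0 < x)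
    (hx₁ : x ≤ 1) (hn : 1 ≤ n) :
    binEntropy p ≤ (1 - 2 * log x) * (n * p) + x * x ^ n := by
  have hlog : log x ≤ 0 := log_nonpos hx₀.le hx₁
  have hn' : (1 : ℝ) ≤ n := by exact_mod_cast hn
  have hexp : exp (-1 - -(2 * n * log x)) ≤ x * x ^ n := calc
    _ ≤ exp ((2 * n : ℕ) * log x) := exp_le_exp.2 (by push_cast; linarith)
    _ = x ^ (2 * n) := by rw [exp_nat_mul, exp_log hx₀]
    _ ≤ x ^ (n + 1) := pow_le_pow_of_le_one hx₀.le hx₁ (by omega)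
    _ = x * x ^ n := pow_succ' x n
  have h := binEntropy_le_mul_add_exp (-(2 * n * log x)) hp₀ hp₁
  nlinarith [mul_nonneg (sub_nonneg.2 hn') hp₀]

end Real

lemma ENNReal.ofReal_binEntropy_le {p x : ℝ} {n : ℕ} (hp₀ : 0 ≤ p) (hp₁ : p ≤ 1) (hx₀ : 0 < x)
    (hx₁ : x ≤ 1) (hn : 1 ≤ n) :
    ENNReal.ofReal (Real.binEntropy p)
      ≤ ENNReal.ofReal (1 - 2 * Real.log x) * (n * ENNReal.ofReal p)
        + ENNReal.ofReal x * ENNReal.ofReal x ^ n := by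
  have hC : 0 ≤ 1 - 2 * Real.log x := by linarith [Real.log_nonpos hx₀.le hx₁]
  refine (ENNReal.ofReal_le_ofReal
    (Real.binEntropy_le_mul_add_pow_succ hp₀ hp₁ hx₀ hx₁ hn)).trans_eq ?_
  rw [ENNReal.ofReal_add (by positivity) (by positivity), ENNReal.ofReal_mul hC,
    ENNReal.ofReal_mul n.cast_nonneg, ENNReal.ofReal_mul hx₀.le, ENNReal.ofReal_pow hx₀.le,
    ENNReal.ofReal_natCast]

section WordLength

variable {G : Type*} [Group G] {S : Set G}

lemma Subgroup.mclosure_eq_top_of_closure_eq_top (hSsym : ∀ s ∈ S, s⁻¹ ∈ S)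
    (hSgen : Subgroup.closure S = ⊤) : Submonoid.closure S = ⊤ := by
  have hinv : S ∪ S⁻¹ = S := Set.union_eq_left.2 fun s hs => by simpa using hSsym _ hs
  have h := Subgroup.closure_toSubmonoid S
  rwa [hSgen, hinv, Subgroup.top_toSubmonoid, eq_comm] at h

lemma exists_list_length_eq_wordLength (hS : Submonoid.closure S = ⊤) (g : G) :
    ∃ l : List G, l.length = wordLength S g ∧ (∀ s ∈ l, s ∈ S) ∧ l.prod = g := by
  obtain ⟨l, hlS, hl⟩ := Submonoid.exists_list_of_mem_closure (hS ▸ Submonoid.mem_top g)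
  exact Nat.sInf_mem (s := {n | ∃ l : List G, l.length = n ∧ (∀ s ∈ l, s ∈ S) ∧ l.prod = g})
    ⟨l.length, l, rfl, hlS, hl⟩

lemma one_le_wordLength (hS : Submonoid.closure S = ⊤) {g : G} (hg : g ≠ 1) :
    1 ≤ wordLength S g := by
  obtain ⟨l, hlen, -, rfl⟩ := exists_list_length_eq_wordLength hS g
  rw [← hlen, Nat.one_le_iff_ne_zero, Ne, List.length_eq_zero_iff]
  rintro rfl
  exact hg List.prod_nil

lemma tsum_pow_length {α : Type*} [Fintype α] (r : ℝ≥0∞) :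
    ∑' l : List α, r ^ l.length = ∑' n : ℕ, (Fintype.card α * r) ^ n := by
  rw [← (Equiv.sigmaFiberEquiv (List.length : List α → ℕ)).tsum_eq, ENNReal.tsum_sigma']
  refine tsum_congr fun n => ?_
  calc ∑' l : {l : List α // l.length = n}, r ^ l.1.length
      = ∑' _ : List.Vector α n, r ^ n := tsum_congr fun l => by rw [l.2]
    _ = (Fintype.card α * r) ^ n := by
      rw [tsum_fintype, Finset.sum_const, Finset.card_univ, card_vector, nsmul_eq_mul, mul_pow]
      push_cast
      rfl

lemma tsum_pow_wordLength_le (hS : Submonoid.closure S = ⊤) (hSfin : S.Finite) {r : ℝ≥0∞}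
    (hr : S.ncard * r ≤ 2⁻¹) : ∑' g : G, r ^ wordLength S g ≤ 2 := by
  have := hSfin.fintype
  choose w hw_len hw_mem hw_prod using exists_list_length_eq_wordLength hS
  let f : G → List S := fun g => (w g).pmap Subtype.mk (hw_mem g)
  have hfw (g : G) : (f g).map Subtype.val = w g := by simp [f, List.map_pmap]
  have hf : Function.Injective f := fun g h hgh => by
    rw [← hw_prod g, ← hw_prod h, ← hfw, ← hfw, hgh]
  calc ∑' g, r ^ wordLength S g = ∑' g, r ^ (f g).length := by simp [f, hw_len]
    _ ≤ ∑' l : List S, r ^ l.length := ENNReal.tsum_comp_le_tsum_of_injective hf _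
    _ = ∑' n, (Fintype.card S * r) ^ n := tsum_pow_length r
    _ ≤ ∑' n : ℕ, 2⁻¹ ^ n := ENNReal.tsum_le_tsum fun n => by
      gcongr
      rwa [← Nat.card_eq_fintype_card, Nat.card_coe_set_eq]
    _ = 2 := ENNReal.tsum_geometric_two

lemma exists_ofReal_mul_tsum_pow_wordLength_le (hS : Submonoid.closure S = ⊤)
    (hSfin : S.Finite) {ε : ℝ} (hε : 0 < ε) :
    ∃ x : ℝ, 0 < x ∧ x ≤ 1 ∧
      ENNReal.ofReal x * ∑' g : G, ENNReal.ofReal x ^ wordLength S g ≤ ENNReal.ofReal ε := by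
  obtain ⟨x, hx₀, hx₁, hxS, hxε⟩ :
      ∃ x : ℝ, 0 < x ∧ x ≤ 1 ∧ S.ncard * x ≤ 2⁻¹ ∧ 2 * x ≤ ε := by
    have hm₀ : 0 < min ε 1 := lt_min hε one_pos
    have hm₁ : min ε 1 ≤ 1 := min_le_right ε 1
    have hmε : min ε 1 ≤ ε := min_le_left ε 1
    have hk : (0 : ℝ) ≤ S.ncard := Nat.cast_nonneg _
    refine ⟨min ε 1 / (2 * S.ncard + 2), by positivity, ?_, ?_, ?_⟩
    · rw [div_le_one (by positivity)]; linarith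
    · rw [mul_div_assoc', div_le_iff₀ (by positivity)]; nlinarith
    · rw [mul_div_assoc', div_le_iff₀ (by positivity)]; nlinarith
  refine ⟨x, hx₀, hx₁, ?_⟩
  have hr : (S.ncard : ℝ≥0∞) * ENNReal.ofReal x ≤ 2⁻¹ := by
    rw [← ENNReal.ofReal_natCast, ← ENNReal.ofReal_mul (Nat.cast_nonneg _),
      ← ENNReal.ofReal_ofNat 2, ← ENNReal.ofReal_inv_of_pos two_pos]
    exact ENNReal.ofReal_le_ofReal hxS
  calc _ ≤ ENNReal.ofReal x * 2 := by gcongr; exact tsum_pow_wordLength_le hS hSfin hr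
    _ = ENNReal.ofReal (2 * x) := by
      rw [ENNReal.ofReal_mul zero_le_two, ENNReal.ofReal_ofNat, mul_comm]
    _ ≤ ENNReal.ofReal ε := ENNReal.ofReal_le_ofReal hxε

end WordLength

theorem stmt0 {G : Type*} [Group G] (S : Set G) (hSfin : S.Finite)
    (hSsym : ∀ s ∈ S, s⁻¹ ∈ S) (hSgen : Subgroup.closure S = ⊤)
    {ε : ℝ} (hε : 0 < ε) :
    ∃ C : ℝ, 0 ≤ C ∧ ∀ p : G → ℝ, (∀ g : G, 0 ≤ p g ∧ p g ≤ 1) →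
      (∑' g : {g : G // g ≠ 1},
          ENNReal.ofReal (Real.negMulLog (p (g : G)) + Real.negMulLog (1 - p (g : G))))
        ≤ ENNReal.ofReal C *
            (∑' g : {g : G // g ≠ 1},
              (wordLength S (g : G) : ℝ≥0∞) * ENNReal.ofReal (p (g : G)))
          + ENNReal.ofReal ε := by
  have hS := Subgroup.mclosure_eq_top_of_closure_eq_top hSsym hSgen
  obtain ⟨x, hx₀, hx₁, hx⟩ := exists_ofReal_mul_tsum_pow_wordLength_le hS hSfin hε
  refine ⟨1 - 2 * Real.log x, by linarith [Real.log_nonpos hx₀.le hx₁], fun p hp => ?_⟩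
  set r := ENNReal.ofReal x
  have htail : ∑' g : {g : G // g ≠ 1}, r * r ^ wordLength S g ≤ ENNReal.ofReal ε := by
    rw [ENNReal.tsum_mul_left]
    refine le_trans ?_ hx
    gcongr
    exact ENNReal.tsum_comp_le_tsum_of_injective Subtype.val_injective _
  simp_rw [← Real.binEntropy_eq_negMulLog_add_negMulLog_one_sub]
  calc _ ≤ ∑' g : {g : G // g ≠ 1}, (ENNReal.ofReal (1 - 2 * Real.log x) *
          (wordLength S g * ENNReal.ofReal (p g)) + r * r ^ wordLength S g) :=
        ENNReal.tsum_le_tsum fun g => ENNReal.ofReal_binEntropy_le (hp g).1 (hp g).2 hx₀ hx₁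
          (one_le_wordLength hS g.2)
    _ = _ := by rw [ENNReal.tsum_add, ENNReal.tsum_mul_left]
    _ ≤ _ := add_le_add_right htail _
end

section
/- Let G and H be finitely generated groups, let (X,μ,T) be an ergodic G-system, and let (α,U) be an H-valued partial cocycle over it with μ(U) > 0. Then there exists a measurable cocycle σ : G × X → H over T such that for every g ∈ G, σ(g,x) = α(g,x) for μ-a.e. x ∈ U ∩ T^{g^{-1}}U. -/
open MeasureTheory

theorem stmt3 {G H X : Type*} [Group G] [Group H] [Group.FG G] [Group.FG H]
    [MeasurableSpace X] [StandardBorelSpace X]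
    (μ : Measure X) [IsProbabilityMeasure μ]
    -- a measurable μ-preserving action T of G
    (T : G → X → X) (hT1 : T 1 = id) (hTmul : ∀ g k : G, T (g * k) = T g ∘ T k)
    (hTmp : ∀ g : G, MeasurePreserving (T g) μ μ)
    -- ergodicity
    (herg : ∀ A : Set X, MeasurableSet A →
      (∀ g : G, μ (symmDiff (T g ⁻¹' A) A) = 0) → μ A = 0 ∨ μ A = 1)
    -- an H-valued partial cocycle (α, U) over (X, μ, T), with μ(U) > 0
    (U : Set X) (hU : MeasurableSet U) (hUpos : 0 < μ U)
    (α : G → X → H)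
    (hαmeas : ∀ (g : G) (h : H), MeasurableSet {x : X | x ∈ U ∧ T g x ∈ U ∧ α g x = h})
    (hαcoc : ∀ (g k : G) (x : X), x ∈ U → T k x ∈ U → T (g * k) x ∈ U →
      α (g * k) x = α g (T k x) * α k x) :
    -- there is a measurable full cocycle σ : G × X → H over T extending α a.e.
    ∃ σ : G → X → H,
      (∀ (g : G) (h : H), MeasurableSet {x : X | σ g x = h}) ∧
      (∀ (g k : G) (x : X), σ (g * k) x = σ g (T k x) * σ k x) ∧
      (∀ g : G, ∀ᵐ x ∂μ, x ∈ U → T g x ∈ U → σ g x = α g x) := by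
  classical
  -- G is countable since it is finitely generated
  have hGc : Countable G := by
    have hfg : Monoid.FG G := Group.fg_iff_monoid_fg.mp ‹Group.FG G›
    obtain ⟨S, hS1, hS2⟩ := Monoid.fg_iff.mp hfg
    have : Countable S := hS2.countable
    have hsurj : Function.Surjective (fun l : List S => (l.map Subtype.val).prod) := by
      intro g
      have hg : g ∈ Submonoid.closure S := hS1 ▸ Submonoid.mem_top g
      obtain ⟨l, hl, hprod⟩ := Submonoid.exists_list_of_mem_closure hg
      refine ⟨l.attach.map (fun x => ⟨x.1, hl x.1 x.2⟩), ?_⟩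
      simpa [List.map_map, Function.comp] using hprod
    exact hsurj.countable
  have hGne : Nonempty G := ⟨1⟩
  obtain ⟨f, hf⟩ := exists_surjective_nat G
  -- an enumeration of G starting with the identity
  set e : ℕ → G := fun n => if n = 0 then 1 else f (n - 1) with he
  have he0 : e 0 = 1 := by simp [he]
  have hesurj : ∀ g : G, ∃ n, e n = g := by
    intro g; obtain ⟨m, hm⟩ := hf g; exact ⟨m + 1, by simp [he, hm]⟩
  have hTc : ∀ (a b : G) (x : X), T a (T b x) = T (a * b) x := by
    intro a b x; rw [hTmul]; rfl
  have hT1' : ∀ x : X, T 1 x = x := fun x => by rw [hT1]; rfl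
  have hPU : ∀ x ∈ U, ∃ n, T (e n) x ∈ U := by
    intro x hx; exact ⟨0, by rw [he0, hT1']; exact hx⟩
  -- the first-return map r
  set r : X → G := fun x => if h : ∃ n, T (e n) x ∈ U then e (Nat.find h) else 1 with hr
  have hrU : ∀ (x : X) (h : ∃ n, T (e n) x ∈ U), T (r x) x ∈ U := by
    intro x h; rw [hr]; simp only [dif_pos h]; exact Nat.find_spec h
  have hrmemU : ∀ x ∈ U, r x = 1 := by
    intro x hx
    have h : ∃ n, T (e n) x ∈ U := hPU x hx
    have h0 : Nat.find h = 0 := by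
      rw [Nat.find_eq_zero h, he0, hT1']; exact hx
    rw [hr]; simp only [dif_pos h, h0, he0]
  -- invariance of the "orbit meets U" set
  have hPinv : ∀ (k : G) (x : X), (∃ n, T (e n) x ∈ U) ↔ (∃ n, T (e n) (T k x) ∈ U) := by
    intro k x
    constructor
    · rintro ⟨n, hn⟩
      obtain ⟨m, hm⟩ := hesurj (e n * k⁻¹)
      refine ⟨m, ?_⟩
      rw [hTc, hm, inv_mul_cancel_right]; exact hn
    · rintro ⟨n, hn⟩
      obtain ⟨m, hm⟩ := hesurj (e n * k)
      refine ⟨m, ?_⟩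
      rw [hm, ← hTc]; exact hn
  -- the full cocycle
  set σ : G → X → H := fun g x =>
    if _ : ∃ n, T (e n) x ∈ U then α (r (T g x) * g * (r x)⁻¹) (T (r x) x) else 1 with hσ
  -- key fact: r x = e n on the set A g n below
  have hrA : ∀ (n : ℕ) (x : X), T (e n) x ∈ U → (∀ m < n, T (e m) x ∉ U) → r x = e n := by
    intro n x h1 h2
    have h : ∃ n, T (e n) x ∈ U := ⟨n, h1⟩
    have : Nat.find h = n := (Nat.find_eq_iff h).mpr ⟨h1, h2⟩
    rw [hr]; simp only [dif_pos h, this]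
  refine ⟨σ, ?_, ?_, ?_⟩
  · -- measurability
    intro g h
    set c : ℕ → ℕ → G := fun n m => e m * g * (e n)⁻¹ with hc
    set A : ℕ → Set X := fun n =>
      (T (e n)) ⁻¹' U ∩ ⋂ m, ⋂ (_ : m < n), ((T (e m)) ⁻¹' U)ᶜ with hA
    have hAmeas : ∀ n, MeasurableSet (A n) := by
      intro n
      exact ((hTmp (e n)).measurable hU).inter
        (MeasurableSet.iInter fun m => MeasurableSet.iInter fun _ =>
          ((hTmp (e m)).measurable hU).compl)
    have hAmem : ∀ (n : ℕ) (x : X), x ∈ A n ↔ T (e n) x ∈ U ∧ ∀ m < n, T (e m) x ∉ U := by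
      intro n x
      simp [hA]
    have hAfind : ∀ (x : X) (hx : ∃ n, T (e n) x ∈ U), x ∈ A (Nat.find hx) := by
      intro x hx
      rw [hAmem]
      exact ⟨Nat.find_spec hx, fun m hm => Nat.find_min hx hm⟩
    have hset : {x : X | σ g x = h} =
        ((⋃ n, (T (e n)) ⁻¹' U)ᶜ ∩ {x : X | (1 : H) = h}) ∪
        ⋃ n, ⋃ m, (A n ∩ (T g) ⁻¹' (A m) ∩
          (T (e n)) ⁻¹' {y : X | y ∈ U ∧ T (c n m) y ∈ U ∧ α (c n m) y = h}) := by
      ext x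
      simp only [Set.mem_setOf_eq, Set.mem_union, Set.mem_inter_iff, Set.mem_compl_iff,
        Set.mem_iUnion, Set.mem_preimage, not_exists]
      constructor
      · intro hσx
        by_cases hx : ∃ n, T (e n) x ∈ U
        · right
          have hgx : ∃ n, T (e n) (T g x) ∈ U := (hPinv g x).mp hx
          refine ⟨Nat.find hx, Nat.find hgx, ⟨hAfind x hx, hAfind (T g x) hgx⟩, ?_⟩
          have hrx : r x = e (Nat.find hx) := by rw [hr]; simp only [dif_pos hx]
          have hrgx : r (T g x) = e (Nat.find hgx) := by rw [hr]; simp only [dif_pos hgx]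
          have hσval : σ g x = α (c (Nat.find hx) (Nat.find hgx)) (T (e (Nat.find hx)) x) := by
            rw [hσ]; simp only [dif_pos hx]; rw [hrx, hrgx]
          refine ⟨Nat.find_spec hx, ?_, by rw [← hσval]; exact hσx⟩
          rw [hTc, hc]
          simp only [inv_mul_cancel_right]
          rw [← hTc]
          exact Nat.find_spec hgx
        · left
          refine ⟨fun n => (not_exists.mp hx) n, ?_⟩
          have : σ g x = 1 := by rw [hσ]; simp only [dif_neg hx]
          rw [← this]; exact hσx
      · rintro (⟨hx, h1⟩ | ⟨n, m, ⟨hAn, hAm⟩, hyU, hycU, hyα⟩)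
        · have hx' : ¬ ∃ n, T (e n) x ∈ U := not_exists.mpr hx
          rw [hσ]; simp only [dif_neg hx']; exact h1
        · rw [hAmem] at hAn hAm
          have hrx : r x = e n := hrA n x hAn.1 hAn.2
          have hrgx : r (T g x) = e m := hrA m (T g x) hAm.1 hAm.2
          have hx : ∃ n, T (e n) x ∈ U := ⟨n, hAn.1⟩
          rw [hσ]; simp only [dif_pos hx]; rw [hrx, hrgx]; exact hyα
    rw [hset]
    refine MeasurableSet.union ?_ (MeasurableSet.iUnion fun n => MeasurableSet.iUnion fun m =>
      ((hAmeas n).inter ((hTmp g).measurable (hAmeas m))).inter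
        ((hTmp (e n)).measurable (hαmeas (c n m) h)))
    refine (MeasurableSet.iUnion fun n => (hTmp (e n)).measurable hU).compl.inter ?_
    by_cases h1 : (1 : H) = h
    · have : {x : X | (1 : H) = h} = Set.univ := by ext x; simp [h1]
      rw [this]; exact MeasurableSet.univ
    · have : {x : X | (1 : H) = h} = ∅ := by ext x; simp [h1]
      rw [this]; exact MeasurableSet.empty
  · -- the cocycle identity
    intro g k x
    by_cases h : ∃ n, T (e n) x ∈ U
    · have hk : ∃ n, T (e n) (T k x) ∈ U := (hPinv k x).mp h
      have hgk : ∃ n, T (e n) (T (g * k) x) ∈ U := (hPinv (g * k) x).mp h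
      have hy : T (r x) x ∈ U := hrU x h
      have eb : T (r (T k x) * k * (r x)⁻¹) (T (r x) x) = T (r (T k x)) (T k x) := by
        rw [hTc, hTc (r (T k x)) k x]
        congr 1
        group
      have eab : T ((r (T (g * k) x) * g * (r (T k x))⁻¹) * (r (T k x) * k * (r x)⁻¹))
          (T (r x) x) = T (r (T (g * k) x)) (T (g * k) x) := by
        rw [hTc, hTc (r (T (g * k) x)) (g * k) x]
        congr 1
        group
      have hby : T (r (T k x) * k * (r x)⁻¹) (T (r x) x) ∈ U := by
        rw [eb]; exact hrU _ hk
      have haby : T ((r (T (g * k) x) * g * (r (T k x))⁻¹) * (r (T k x) * k * (r x)⁻¹))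
          (T (r x) x) ∈ U := by
        rw [eab]; exact hrU _ hgk
      have key := hαcoc (r (T (g * k) x) * g * (r (T k x))⁻¹) (r (T k x) * k * (r x)⁻¹)
        (T (r x) x) hy hby haby
      rw [hσ]
      simp only [dif_pos h, dif_pos hk]
      rw [hTc g k x]
      calc α (r (T (g * k) x) * (g * k) * (r x)⁻¹) (T (r x) x)
          = α ((r (T (g * k) x) * g * (r (T k x))⁻¹) * (r (T k x) * k * (r x)⁻¹))
              (T (r x) x) := by congr 1; group
        _ = α (r (T (g * k) x) * g * (r (T k x))⁻¹)
              (T (r (T k x) * k * (r x)⁻¹) (T (r x) x)) *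
            α (r (T k x) * k * (r x)⁻¹) (T (r x) x) := key
        _ = α (r (T (g * k) x) * g * (r (T k x))⁻¹) (T (r (T k x)) (T k x)) *
            α (r (T k x) * k * (r x)⁻¹) (T (r x) x) := by rw [eb]
    · have hk : ¬ ∃ n, T (e n) (T k x) ∈ U := fun hh => h ((hPinv k x).mpr hh)
      rw [hσ]
      simp only [dif_neg h, dif_neg hk, one_mul]
  · -- σ extends α (in fact everywhere, not just a.e.)
    intro g
    refine Filter.Eventually.of_forall ?_
    intro x hx hgx
    have h : ∃ n, T (e n) x ∈ U := hPU x hx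
    rw [hσ]
    simp only [dif_pos h]
    rw [hrmemU x hx, hrmemU (T g x) hgx, hT1']
    simp
end

section
/- Let G and H be finitely generated groups, let (X,μ,T) be an ergodic G-system, let U ⊆ X be measurable with μ(U) > 0, and let σ, τ : G × X → H be two measurable cocycles over T such that for every g ∈ G, σ(g,x) = τ(g,x) for μ-a.e. x ∈ U ∩ T^{g^{-1}}U. Then σ and τ are cohomologous over (X,μ,T). -/
/-!
The action sweeps `U` out to the invariant set `⋃ g, (T g)⁻¹' U`, which is conull by ergodicity.
Pick measurably, for a.e. `x`, a group element `a x` moving `x` into `U`, and set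
`η x = τ(a x, x)⁻¹ σ(a x, x)`. By the cocycle identity, `σ(q p⁻¹, T p x) = σ(q, x) σ(p, x)⁻¹`,
so the agreement of `σ` and `τ` between returns to `U` says that `τ(p, x)⁻¹ σ(p, x)` does not
depend on the choice of `p` with `T p x ∈ U`, which makes `η` a transfer function from `τ` to `σ`.
-/

open MeasureTheory

theorem Group.FG.countable (G : Type*) [Group G] [Group.FG G] : Countable G := by
  obtain ⟨α, _, φ, hφ⟩ := Group.fg_iff_exists_freeGroup_hom_surjective_finite.mp ‹_›
  exact hφ.countable

theorem exists_measurable_forall_mem_of_mem_iUnion {X ι : Type*} [MeasurableSpace X]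
    [MeasurableSpace ι] [Countable ι] [Nonempty ι] {s : ι → Set X}
    (hs : ∀ i, MeasurableSet (s i)) :
    ∃ a : X → ι, Measurable a ∧ ∀ x ∈ ⋃ i, s i, x ∈ s (a x) := by
  classical
  obtain ⟨f, hf⟩ := exists_surjective_nat ι
  have hex : ∀ x, ∃ n, x ∈ s (f n) ∨ x ∉ ⋃ i, s i := by
    intro x
    by_cases hx : x ∈ ⋃ i, s i
    · obtain ⟨i, hi⟩ := Set.mem_iUnion.mp hx
      obtain ⟨n, rfl⟩ := hf i
      exact ⟨n, .inl hi⟩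
    · exact ⟨0, .inr hx⟩
  refine ⟨fun x => f (Nat.find (hex x)), ?_, fun x hx => ?_⟩
  · exact measurable_from_nat.comp
      (measurable_find hex fun n => (hs _).union (MeasurableSet.iUnion hs).compl)
  · exact (Nat.find_spec (hex x)).resolve_right (not_not.mpr hx)

theorem measurable_apply_apply_of_countable {ι X Y : Type*} [MeasurableSpace ι] [Countable ι]
    [MeasurableSingletonClass ι] [MeasurableSpace X] [MeasurableSpace Y] {F : ι → X → Y}
    (hF : ∀ i, Measurable (F i)) {a : X → ι} (ha : Measurable a) :
    Measurable fun x => F (a x) x :=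
  (measurable_from_prod_countable_right (f := Function.uncurry F) hF).comp
    (ha.prodMk measurable_id)

section Action

variable {G X : Type*} [Group G] {T : G → X → X}

theorem ae_mem_iUnion_preimage_of_ergodic [Countable G] [MeasurableSpace X] {μ : Measure X}
    [IsProbabilityMeasure μ]
    (hT1 : T 1 = id) (hTmul : ∀ g k : G, T (g * k) = T g ∘ T k)
    (hTm : ∀ g : G, Measurable (T g))
    (herg : ∀ A : Set X, MeasurableSet A →
      (∀ g : G, μ (symmDiff (T g ⁻¹' A) A) = 0) → μ A = 0 ∨ μ A = 1)
    {U : Set X} (hU : MeasurableSet U) (hUpos : 0 < μ U) :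
    ∀ᵐ x ∂μ, x ∈ ⋃ g, T g ⁻¹' U := by
  set V := ⋃ g, T g ⁻¹' U
  have hV : MeasurableSet V := MeasurableSet.iUnion fun g => hTm g hU
  have hinv (g : G) : T g ⁻¹' V = V := by
    simp only [V, Set.preimage_iUnion, ← Set.preimage_comp, ← hTmul]
    exact (Equiv.mulRight g).surjective.iUnion_comp (fun k => T k ⁻¹' U)
  have hUV : U ⊆ V := fun x hx => Set.mem_iUnion.mpr ⟨1, by rwa [Set.mem_preimage, hT1]⟩
  rw [ae_mem_iff_measure_eq hV.nullMeasurableSet, measure_univ]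
  refine (herg V hV fun g => by simp [hinv g]).resolve_left fun h0 => ?_
  exact hUpos.ne' (measure_mono_null hUV h0)

section Cocycle

variable {H : Type*} [Group H]

def IsCocycle (T : G → X → X) (σ : G → X → H) : Prop :=
  ∀ (g k : G) (x : X), σ (g * k) x = σ g (T k x) * σ k x

variable {σ τ : G → X → H}

theorem IsCocycle.apply_mul_inv (hσ : IsCocycle T σ) (p q : G) (x : X) :
    σ (q * p⁻¹) (T p x) = σ q x * (σ p x)⁻¹ := by
  rw [eq_mul_inv_iff_mul_eq, ← hσ, inv_mul_cancel_right]

theorem IsCocycle.eq_inv_mul_mul (hσ : IsCocycle T σ) (hτ : IsCocycle T τ) (b g : G) (x : X) :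
    σ g x = ((τ b (T g x))⁻¹ * σ b (T g x))⁻¹ * τ g x * ((τ (b * g) x)⁻¹ * σ (b * g) x) := by
  rw [hσ, hτ]
  group

theorem ae_forall_inv_mul_eq_of_ae_eq_on [Countable G] [MeasurableSpace X] {μ : Measure X}
    (hTmul : ∀ g k : G, T (g * k) = T g ∘ T k)
    (hT : ∀ g : G, Measure.QuasiMeasurePreserving (T g) μ μ)
    (hσ : IsCocycle T σ) (hτ : IsCocycle T τ) {U : Set X}
    (hagree : ∀ g : G, ∀ᵐ x ∂μ, x ∈ U → T g x ∈ U → σ g x = τ g x) :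
    ∀ᵐ x ∂μ, ∀ p q : G, T p x ∈ U → T q x ∈ U →
      (τ p x)⁻¹ * σ p x = (τ q x)⁻¹ * σ q x := by
  refine ae_all_iff.mpr fun p => ae_all_iff.mpr fun q => ?_
  filter_upwards [(hT p).ae (hagree (q * p⁻¹))] with x hx hp hq
  have hpq : T (q * p⁻¹) (T p x) = T q x := by
    rw [← Function.comp_apply (f := T _), ← hTmul, inv_mul_cancel_right]
  have h := hx hp (hpq ▸ hq)
  rw [hσ.apply_mul_inv, hτ.apply_mul_inv, mul_inv_eq_iff_eq_mul, mul_assoc,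
    ← inv_mul_eq_iff_eq_mul] at h
  exact h.symm

end Cocycle

end Action

theorem stmt4_general {G H X : Type*} [Group G] [Group H] [Group.FG G] [Group.FG H]
    [MeasurableSpace X]
    (μ : Measure X) [IsProbabilityMeasure μ]
    -- a measurable μ-preserving action T of G
    (T : G → X → X) (hT1 : T 1 = id) (hTmul : ∀ g k : G, T (g * k) = T g ∘ T k)
    (hTmp : ∀ g : G, MeasurePreserving (T g) μ μ)
    -- ergodicity
    (herg : ∀ A : Set X, MeasurableSet A →
      (∀ g : G, μ (symmDiff (T g ⁻¹' A) A) = 0) → μ A = 0 ∨ μ A = 1)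
    (U : Set X) (hU : MeasurableSet U) (hUpos : 0 < μ U)
    -- two measurable cocycles σ, τ over T
    (σ τ : G → X → H)
    (hσmeas : ∀ (g : G) (h : H), MeasurableSet {x : X | σ g x = h})
    (hτmeas : ∀ (g : G) (h : H), MeasurableSet {x : X | τ g x = h})
    (hσcoc : ∀ (g k : G) (x : X), σ (g * k) x = σ g (T k x) * σ k x)
    (hτcoc : ∀ (g k : G) (x : X), τ (g * k) x = τ g (T k x) * τ k x)
    -- which agree a.e. on the domain of the partial cocycle
    (hagree : ∀ g : G, ∀ᵐ x ∂μ, x ∈ U → T g x ∈ U → σ g x = τ g x) :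
    -- then σ and τ are cohomologous over (X, μ, T)
    ∃ η : X → H, (∀ h : H, MeasurableSet {x : X | η x = h}) ∧
      ∀ g : G, ∀ᵐ x ∂μ, σ g x = (η (T g x))⁻¹ * τ g x * η x := by
  have := Group.FG.countable G
  have := Group.FG.countable H
  -- with the discrete σ-algebras, measurable fibres are the same as measurability
  let : MeasurableSpace G := ⊤
  let : MeasurableSpace H := ⊤
  have hTm (g : G) : Measurable (T g) := (hTmp g).measurable
  obtain ⟨a, ha, haU⟩ := exists_measurable_forall_mem_of_mem_iUnion fun g => hTm g hU
  have hV := ae_mem_iUnion_preimage_of_ergodic hT1 hTmul hTm herg hU hUpos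
  have hW := ae_forall_inv_mul_eq_of_ae_eq_on hTmul (fun g => (hTmp g).quasiMeasurePreserving)
    hσcoc hτcoc hagree
  have hη : Measurable fun x => (τ (a x) x)⁻¹ * σ (a x) x :=
    (measurable_apply_apply_of_countable (fun g => measurable_to_countable' (hτmeas g)) ha).inv.mul
      (measurable_apply_apply_of_countable (fun g => measurable_to_countable' (hσmeas g)) ha)
  refine ⟨_, fun h => hη (measurableSet_singleton h), fun g => ?_⟩
  filter_upwards [hV, (hTmp g).quasiMeasurePreserving.ae hV, hW] with x hx hgx hWx
  have hbg : T (a (T g x) * g) x ∈ U := by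
    rw [hTmul]
    exact haU _ hgx
  rw [IsCocycle.eq_inv_mul_mul hσcoc hτcoc (a (T g x)) g x, ← hWx _ _ (haU x hx) hbg]

theorem stmt4 {G H X : Type*} [Group G] [Group H] [Group.FG G] [Group.FG H]
    [MeasurableSpace X] [StandardBorelSpace X]
    (μ : Measure X) [IsProbabilityMeasure μ]
    -- a measurable μ-preserving action T of G
    (T : G → X → X) (hT1 : T 1 = id) (hTmul : ∀ g k : G, T (g * k) = T g ∘ T k)
    (hTmp : ∀ g : G, MeasurePreserving (T g) μ μ)
    -- ergodicity
    (herg : ∀ A : Set X, MeasurableSet A →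
      (∀ g : G, μ (symmDiff (T g ⁻¹' A) A) = 0) → μ A = 0 ∨ μ A = 1)
    (U : Set X) (hU : MeasurableSet U) (hUpos : 0 < μ U)
    -- two measurable cocycles σ, τ over T
    (σ τ : G → X → H)
    (hσmeas : ∀ (g : G) (h : H), MeasurableSet {x : X | σ g x = h})
    (hτmeas : ∀ (g : G) (h : H), MeasurableSet {x : X | τ g x = h})
    (hσcoc : ∀ (g k : G) (x : X), σ (g * k) x = σ g (T k x) * σ k x)
    (hτcoc : ∀ (g k : G) (x : X), τ (g * k) x = τ g (T k x) * τ k x)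
    -- which agree a.e. on the domain of the partial cocycle
    (hagree : ∀ g : G, ∀ᵐ x ∂μ, x ∈ U → T g x ∈ U → σ g x = τ g x) :
    -- then σ and τ are cohomologous over (X, μ, T)
    ∃ η : X → H, (∀ h : H, MeasurableSet {x : X | η x = h}) ∧
      ∀ g : G, ∀ᵐ x ∂μ, σ g x = (η (T g x))⁻¹ * τ g x * η x :=
  stmt4_general μ T hT1 hTmul hTmp herg U hU hUpos σ τ hσmeas hτmeas hσcoc hτcoc hagree
end

section
/- Let (X,μ,T) be an ergodic G-system and let G_1 ⊴ G be a normal subgroup of finite index. Then there is a finite measurable partition P of X into sets of equal measure, each of which is invariant (mod μ) under T^h for every h ∈ G_1, such that for each cell P ∈ P the restricted action of G_1 on (P, μ|_P) is ergodic (every measurable A ⊆ P with μ|_P(T^h A Δ A) = 0 for all h ∈ G_1 has μ|_P(A) ∈ {0,1}). -/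
/-!
Let `α` be the infimum of the measures of the non-null `G₁`-invariant sets. Translating such a
set `A` by representatives of the finitely many cosets of `G₁` gives a `G`-invariant set (by
normality), hence a conull one by ergodicity, so `α ≥ [G : G₁]⁻¹ > 0`. Pick a non-null invariant
`W` with `μ W < 2α`: no invariant set splits it into two non-null invariant pieces, and the same
holds for its translates, which have the same measure. Two such translates are therefore either
a.e. equal or a.e. disjoint, and after discarding repetitions the translates of `W` form the
required partition, the ergodicity of `G₁` on each cell being exactly the non-splitting property.
-/

open MeasureTheory Set

def IsAEInvariant {G X : Type*} [Group G] [MeasurableSpace X] (μ : Measure X) (T : G → X → X)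
    (H : Subgroup G) (A : Set X) : Prop :=
  MeasurableSet A ∧ ∀ h ∈ H, T h ⁻¹' A =ᵐ[μ] A

namespace IsAEInvariant

variable {G X : Type*} [Group G] [MeasurableSpace X] {μ : Measure X} {T : G → X → X}
  {H : Subgroup G} {A C W W' : Set X}

theorem univ : IsAEInvariant μ T H Set.univ :=
  ⟨MeasurableSet.univ, fun _ _ => .of_eq preimage_univ⟩

theorem inter (hA : IsAEInvariant μ T H A) (hC : IsAEInvariant μ T H C) :
    IsAEInvariant μ T H (A ∩ C) :=
  ⟨hA.1.inter hC.1, fun h hh => (hA.2 h hh).inter (hC.2 h hh)⟩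

theorem diff (hA : IsAEInvariant μ T H A) (hC : IsAEInvariant μ T H C) :
    IsAEInvariant μ T H (A \ C) :=
  ⟨hA.1.diff hC.1, fun h hh => (hA.2 h hh).diff (hC.2 h hh)⟩

theorem preimage_ae_eq_of_mk_eq [H.Normal] (hTmul : ∀ g k : G, T (g * k) = T g ∘ T k)
    (hTmp : ∀ g : G, MeasurePreserving (T g) μ μ) (hA : IsAEInvariant μ T H A) {g g' : G}
    (hgg' : (g : G ⧸ H) = g') : T g' ⁻¹' A =ᵐ[μ] T g ⁻¹' A := by
  have hk : g * (g⁻¹ * g') * g⁻¹ ∈ H := Subgroup.Normal.conj_mem ‹_› _ (QuotientGroup.eq.mp hgg') g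
  have hg' : g' = g * (g⁻¹ * g') * g⁻¹ * g := by group
  rw [hg', hTmul, preimage_comp]
  exact (hTmp g).quasiMeasurePreserving.preimage_ae_eq (hA.2 _ hk)

theorem preimage [H.Normal] (hTmul : ∀ g k : G, T (g * k) = T g ∘ T k)
    (hTmp : ∀ g : G, MeasurePreserving (T g) μ μ) (hA : IsAEInvariant μ T H A) (g : G) :
    IsAEInvariant μ T H (T g ⁻¹' A) := by
  refine ⟨(hTmp g).measurable hA.1, fun h hh => ?_⟩
  rw [← preimage_comp, ← hTmul]
  exact hA.preimage_ae_eq_of_mk_eq hTmul hTmp (by simpa [QuotientGroup.eq] using hh)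

theorem measure_iUnion_preimage_out [H.Normal] [Countable (G ⧸ H)]
    (hTmul : ∀ g k : G, T (g * k) = T g ∘ T k) (hTmp : ∀ g : G, MeasurePreserving (T g) μ μ)
    (herg : ∀ B : Set X, IsAEInvariant μ T ⊤ B → μ B = 0 ∨ μ B = 1)
    (hA : IsAEInvariant μ T H A) (hA0 : μ A ≠ 0) :
    μ (⋃ q : G ⧸ H, T q.out ⁻¹' A) = 1 := by
  have hinv : IsAEInvariant μ T ⊤ (⋃ q : G ⧸ H, T q.out ⁻¹' A) := by
    refine ⟨.iUnion fun q => (hTmp _).measurable hA.1, fun k _ => ?_⟩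
    have hshift : ⋃ q : G ⧸ H, T (q * (k : G ⧸ H)).out ⁻¹' A = ⋃ q : G ⧸ H, T q.out ⁻¹' A :=
      (Equiv.mulRight (k : G ⧸ H)).surjective.iUnion_comp fun q => T q.out ⁻¹' A
    simp only [preimage_iUnion, ← preimage_comp, ← hTmul]
    rw [← hshift]
    refine Filter.EventuallyEq.countable_iUnion fun q => hA.preimage_ae_eq_of_mk_eq hTmul hTmp ?_
    rw [QuotientGroup.mk_mul, QuotientGroup.out_eq', QuotientGroup.out_eq']
  refine (herg _ hinv).resolve_left fun h0 => hA0 ?_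
  rw [← (hTmp (1 : G ⧸ H).out).measure_preimage hA.1.nullMeasurableSet]
  exact measure_mono_null (subset_iUnion (fun q : G ⧸ H => T q.out ⁻¹' A) 1) h0

theorem index_inv_le_measure [H.Normal] [H.FiniteIndex]
    (hTmul : ∀ g k : G, T (g * k) = T g ∘ T k) (hTmp : ∀ g : G, MeasurePreserving (T g) μ μ)
    (herg : ∀ B : Set X, IsAEInvariant μ T ⊤ B → μ B = 0 ∨ μ B = 1)
    (hA : IsAEInvariant μ T H A) (hA0 : μ A ≠ 0) : (H.index : ENNReal)⁻¹ ≤ μ A := by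
  have := Fintype.ofFinite (G ⧸ H)
  rw [ENNReal.inv_le_iff_le_mul (fun _ => Nat.cast_ne_zero.mpr Subgroup.FiniteIndex.index_ne_zero)
    fun _ => hA0]
  calc (1 : ENNReal) = μ (⋃ q : G ⧸ H, T q.out ⁻¹' A) :=
        (hA.measure_iUnion_preimage_out hTmul hTmp herg hA0).symm
    _ ≤ ∑ q : G ⧸ H, μ (T q.out ⁻¹' A) := measure_iUnion_fintype_le μ _
    _ = H.index * μ A := by
        simp only [(hTmp _).measure_preimage hA.1.nullMeasurableSet, Finset.sum_const,
          Finset.card_univ, nsmul_eq_mul, H.index_eq_card, Nat.card_eq_fintype_card]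

theorem measure_eq_zero_or_measure_diff_eq_zero (hW : IsAEInvariant μ T H W)
    (hsmall : ∀ C, IsAEInvariant μ T H C → μ C ≠ 0 → μ W < 2 * μ C)
    (hC : IsAEInvariant μ T H C) (hCW : C ⊆ W) : μ C = 0 ∨ μ (W \ C) = 0 := by
  by_contra! h
  have hsplit : μ C + μ (W \ C) = μ W := by
    rw [← measure_inter_add_sdiff W hC.1, inter_eq_right.mpr hCW]
  have := ENNReal.add_lt_add (hsmall C hC h.1) (hsmall _ (hW.diff hC) h.2)
  rw [← mul_add, hsplit, two_mul] at this
  exact lt_irrefl _ this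

theorem ae_eq_or_aedisjoint (hW : IsAEInvariant μ T H W)
    (hW' : IsAEInvariant μ T H W')
    (hsmall : ∀ C, IsAEInvariant μ T H C → μ C ≠ 0 → μ W < 2 * μ C)
    (hsmall' : ∀ C, IsAEInvariant μ T H C → μ C ≠ 0 → μ W' < 2 * μ C) :
    W =ᵐ[μ] W' ∨ AEDisjoint μ W W' := by
  refine or_iff_not_imp_right.mpr fun h => ae_eq_set.mpr ⟨?_, ?_⟩
  · rw [← sdiff_self_inter]
    exact (hW.measure_eq_zero_or_measure_diff_eq_zero hsmall (hW.inter hW')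
      inter_subset_left).resolve_left h
  · rw [← sdiff_self_inter]
    refine (hW'.measure_eq_zero_or_measure_diff_eq_zero hsmall' (hW'.inter hW)
      inter_subset_left).resolve_left ?_
    rwa [inter_comm]

theorem of_subset (hW : IsAEInvariant μ T H W) (hA : MeasurableSet A) (hAW : A ⊆ W)
    (hnull : ∀ h ∈ H, μ (W ∩ symmDiff (T h ⁻¹' A) A) = 0) : IsAEInvariant μ T H A := by
  refine ⟨hA, fun h hh => measure_symmDiff_eq_zero_iff.mp (measure_mono_null ?_
    (measure_union_null (hnull h hh) (ae_eq_set.mp (hW.2 h hh)).1))⟩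
  rintro x (⟨hxA, hx⟩ | ⟨hx, hxA⟩)
  · by_cases hxW : x ∈ W
    · exact Or.inl ⟨hxW, Or.inl ⟨hxA, hx⟩⟩
    · exact Or.inr ⟨hAW hxA, hxW⟩
  · exact Or.inl ⟨hAW hx, Or.inr ⟨hx, hxA⟩⟩

theorem cond_eq_zero_or_eq_one [IsFiniteMeasure μ] (hW : IsAEInvariant μ T H W)
    (hW0 : μ W ≠ 0) (hsmall : ∀ C, IsAEInvariant μ T H C → μ C ≠ 0 → μ W < 2 * μ C)
    (hAW : A ⊆ W) (hA : MeasurableSet A)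
    (hcond : ∀ h ∈ H, ProbabilityTheory.cond μ W (symmDiff (T h ⁻¹' A) A) = 0) :
    ProbabilityTheory.cond μ W A = 0 ∨ ProbabilityTheory.cond μ W A = 1 := by
  have hinv : IsAEInvariant μ T H A := hW.of_subset hA hAW fun h hh => by
    simpa [ProbabilityTheory.cond_apply hW.1, measure_ne_top] using hcond h hh
  simp only [ProbabilityTheory.cond_apply hW.1, inter_eq_right.mpr hAW]
  rcases hW.measure_eq_zero_or_measure_diff_eq_zero hsmall hinv hAW with h | h
  · simp [h]
  · have hAW' : μ A = μ W := by
      rw [← measure_inter_add_sdiff W hA, inter_eq_right.mpr hAW, h, add_zero]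
    rw [hAW', ENNReal.inv_mul_cancel hW0 (measure_ne_top μ W)]
    exact Or.inr rfl

end IsAEInvariant

section

variable {G X : Type*} [Group G] [MeasurableSpace X] {μ : Measure X} {T : G → X → X}
  {H : Subgroup G}

theorem exists_isAEInvariant_forall_lt_two_mul [IsProbabilityMeasure μ] [H.Normal]
    [H.FiniteIndex] (hTmul : ∀ g k : G, T (g * k) = T g ∘ T k)
    (hTmp : ∀ g : G, MeasurePreserving (T g) μ μ)
    (herg : ∀ B : Set X, IsAEInvariant μ T ⊤ B → μ B = 0 ∨ μ B = 1) :
    ∃ W, IsAEInvariant μ T H W ∧ μ W ≠ 0 ∧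
      ∀ C, IsAEInvariant μ T H C → μ C ≠ 0 → μ W < 2 * μ C := by
  set α := ⨅ (C : Set X) (_ : IsAEInvariant μ T H C ∧ μ C ≠ 0), μ C
  have hα0 : α ≠ 0 := ((ENNReal.inv_pos.mpr (ENNReal.natCast_ne_top H.index)).trans_le
    (le_iInf₂ fun C hC => hC.1.index_inv_le_measure hTmul hTmp herg hC.2)).ne'
  have hαtop : α ≠ ⊤ := ne_top_of_le_ne_top (measure_ne_top μ Set.univ)
    (iInf₂_le _ ⟨IsAEInvariant.univ, by simp⟩)
  have hα : α < 2 * α := two_mul α ▸ ENNReal.lt_add_right hαtop hα0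
  obtain ⟨W, hW⟩ := iInf_lt_iff.mp hα
  obtain ⟨⟨hWinv, hW0⟩, hWlt⟩ := iInf_lt_iff.mp hW
  exact ⟨W, hWinv, hW0, fun C hC hC0 => hWlt.trans_le (mul_le_mul_right (iInf₂_le C ⟨hC, hC0⟩) 2)⟩

end

theorem exists_fin_aedisjoint_subfamily {ι X : Type*} [Finite ι] [Nonempty ι]
    [MeasurableSpace X] {μ : Measure X} (P : ι → Set X)
    (hP : ∀ i j, P i =ᵐ[μ] P j ∨ AEDisjoint μ (P i) (P j)) :
    ∃ (n : ℕ) (f : Fin n → ι), 0 < n ∧ (∀ i j, i ≠ j → AEDisjoint μ (P (f i)) (P (f j))) ∧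
      (⋃ i, P (f i)) =ᵐ[μ] ⋃ i, P i := by
  let s : Setoid ι := ⟨fun i j => P i =ᵐ[μ] P j, ⟨fun _ => .rfl, .symm, .trans⟩⟩
  have : Nonempty (Quotient s) := .map (Quotient.mk s) ‹_›
  let e := (Finite.equivFin (Quotient s)).symm
  refine ⟨Nat.card (Quotient s), fun i => (e i).out, Nat.card_pos, fun i j hij => ?_, ?_⟩
  · refine (hP _ _).resolve_left fun h => hij (e.injective ?_)
    rw [← Quotient.out_eq (e i), ← Quotient.out_eq (e j)]
    exact Quotient.sound h
  · have hreindex : ⋃ i, P (e i).out = ⋃ i, P (Quotient.mk s i).out := by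
      rw [e.surjective.iUnion_comp fun c => P c.out,
        Quotient.mk_surjective.iUnion_comp fun c => P c.out]
    rw [hreindex]
    exact .countable_iUnion fun i => Quotient.mk_out (s := s) i

theorem stmt5_general {G X : Type*} [Group G] [MeasurableSpace X]
    (μ : Measure X) [IsProbabilityMeasure μ]
    -- a measurable μ-preserving action T of G
    (T : G → X → X) (hTmul : ∀ g k : G, T (g * k) = T g ∘ T k)
    (hTmp : ∀ g : G, MeasurePreserving (T g) μ μ)
    -- ergodicity of the G-action
    (herg : ∀ A : Set X, MeasurableSet A →
      (∀ g : G, μ (symmDiff (T g ⁻¹' A) A) = 0) → μ A = 0 ∨ μ A = 1)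
    -- a normal subgroup of finite index
    (G₁ : Subgroup G) (hnorm : G₁.Normal) (hfin : G₁.index ≠ 0) :
    ∃ (n : ℕ) (P : Fin n → Set X), 0 < n ∧
      (∀ i, MeasurableSet (P i)) ∧
      -- a partition of X (mod μ)
      (∀ i j, i ≠ j → μ (P i ∩ P j) = 0) ∧
      μ (⋃ i, P i) = 1 ∧
      -- into sets of equal measure
      (∀ i j, μ (P i) = μ (P j)) ∧
      -- each invariant (mod μ) under T^h for every h ∈ G₁
      (∀ i, ∀ h ∈ G₁, μ (symmDiff (T h ⁻¹' (P i)) (P i)) = 0) ∧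
      -- such that the restricted G₁-action on each cell is ergodic for μ|_P
      (∀ i, ∀ A : Set X, A ⊆ P i → MeasurableSet A →
        (∀ h ∈ G₁, ProbabilityTheory.cond μ (P i) (symmDiff (T h ⁻¹' A) A) = 0) →
        ProbabilityTheory.cond μ (P i) A = 0 ∨ ProbabilityTheory.cond μ (P i) A = 1) := by
  have : G₁.FiniteIndex := ⟨hfin⟩
  have herg' (B : Set X) (hB : IsAEInvariant μ T ⊤ B) : μ B = 0 ∨ μ B = 1 :=
    herg B hB.1 fun g => measure_symmDiff_eq_zero_iff.mpr (hB.2 g (Subgroup.mem_top g))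
  obtain ⟨W, hW, hW0, hsmall⟩ := exists_isAEInvariant_forall_lt_two_mul (H := G₁) hTmul hTmp herg'
  set P : G ⧸ G₁ → Set X := fun q => T q.out ⁻¹' W
  have hP (q : G ⧸ G₁) : IsAEInvariant μ T G₁ (P q) := hW.preimage hTmul hTmp _
  have hPμ (q : G ⧸ G₁) : μ (P q) = μ W := (hTmp _).measure_preimage hW.1.nullMeasurableSet
  have hPsmall (q : G ⧸ G₁) := hPμ q ▸ hsmall
  obtain ⟨n, f, hn, hdisj, hunion⟩ := exists_fin_aedisjoint_subfamily P fun q q' =>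
    (hP q).ae_eq_or_aedisjoint (hP q') (hPsmall q) (hPsmall q')
  refine ⟨n, P ∘ f, hn, fun i => (hP _).1, hdisj, ?_, fun i j => by simp only [Function.comp, hPμ],
    fun i h hh => measure_symmDiff_eq_zero_iff.mpr ((hP _).2 h hh),
    fun i A hAP hA hcond => (hP _).cond_eq_zero_or_eq_one (hPμ _ ▸ hW0) (hPsmall _) hAP hA hcond⟩
  rw [Function.comp_def, measure_congr hunion]
  exact hW.measure_iUnion_preimage_out hTmul hTmp herg' hW0

theorem stmt5 {G X : Type*} [Group G] [MeasurableSpace X] [StandardBorelSpace X]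
    (μ : Measure X) [IsProbabilityMeasure μ]
    -- a measurable μ-preserving action T of G
    (T : G → X → X) (hT1 : T 1 = id) (hTmul : ∀ g k : G, T (g * k) = T g ∘ T k)
    (hTmp : ∀ g : G, MeasurePreserving (T g) μ μ)
    -- ergodicity of the G-action
    (herg : ∀ A : Set X, MeasurableSet A →
      (∀ g : G, μ (symmDiff (T g ⁻¹' A) A) = 0) → μ A = 0 ∨ μ A = 1)
    -- a normal subgroup of finite index
    (G₁ : Subgroup G) (hnorm : G₁.Normal) (hfin : G₁.index ≠ 0) :
    ∃ (n : ℕ) (P : Fin n → Set X), 0 < n ∧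
      (∀ i, MeasurableSet (P i)) ∧
      -- a partition of X (mod μ)
      (∀ i j, i ≠ j → μ (P i ∩ P j) = 0) ∧
      μ (⋃ i, P i) = 1 ∧
      -- into sets of equal measure
      (∀ i j, μ (P i) = μ (P j)) ∧
      -- each invariant (mod μ) under T^h for every h ∈ G₁
      (∀ i, ∀ h ∈ G₁, μ (symmDiff (T h ⁻¹' (P i)) (P i)) = 0) ∧
      -- such that the restricted G₁-action on each cell is ergodic for μ|_P
      (∀ i, ∀ A : Set X, A ⊆ P i → MeasurableSet A →
        (∀ h ∈ G₁, ProbabilityTheory.cond μ (P i) (symmDiff (T h ⁻¹' A) A) = 0) →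
        ProbabilityTheory.cond μ (P i) A = 0 ∨ ProbabilityTheory.cond μ (P i) A = 1) :=
  stmt5_general μ T hTmul hTmp herg G₁ hnorm hfin
end

section
/- Let (X,μ,T) be an ergodic ℤ^d-system and let (α,U) be a ℤ^D-valued partial cocycle over it with μ(U) > 0, which is bounded: there is a finite constant C such that |α(v,x)|_1 ≤ C|v|_1 for μ-a.e. x ∈ U ∩ T^{-v}U, for every v ∈ ℤ^d. Then there exists a measurable cocycle σ : ℤ^d × X → ℤ^D over T and a finite constant C' such that for every v ∈ ℤ^d, σ(v,x) = α(v,x) for μ-a.e. x ∈ U ∩ T^{-v}U, and |σ(v,x)|_1 ≤ C'|v|_1 for μ-a.e. x ∈ X. -/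
open MeasureTheory

/-- The ℓ¹-norm of a vector in ℤ^d. -/
def l1norm {d : ℕ} (v : Fin d → ℤ) : ℕ := ∑ i, (v i).natAbs

/-!
Fix `x` and a return time `a` (`T a x ∈ U`). On the return times `R x = {u | T u x ∈ U}` the
partial cocycle is the increment of the potential `h u = α (u - a) (T a x)`:
`h u - h w = α (u - w) (T w x)`. Pulling the boundedness hypothesis back along the
measure-preserving maps `T w` makes `h` `L`-Lipschitz on `R x` for a.e. `x`, and by ergodicity
`R x` is nonempty for a.e. `x`. Extend `h` coordinatewise to `ℤ^d` by McShane's formula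
`M v = sup_{u ∈ R x} (h u - L |v - u|)` and set `σ v x = M v - M 0`. Changing the base point `a`
shifts `h` by a constant, so `σ` does not depend on it, and passing from `x` to `T w x`
translates `R x` and `h` by `w`, which is the cocycle identity. On `{x | T a x ∈ U}` each `M v`
is a countable supremum of measurable functions, so `σ` is measurable.
-/

section L1

variable {d : ℕ}

@[simp]
lemma l1norm_zero : l1norm (0 : Fin d → ℤ) = 0 := by
  simp [l1norm]

lemma l1norm_sub_comm (u v : Fin d → ℤ) : l1norm (u - v) = l1norm (v - u) := by
  unfold l1norm
  congr 1 with i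
  rw [Pi.sub_apply, Pi.sub_apply, ← Int.natAbs_neg, neg_sub]

lemma l1norm_add_le (u v : Fin d → ℤ) : l1norm (u + v) ≤ l1norm u + l1norm v := by
  rw [l1norm, l1norm, l1norm, ← Finset.sum_add_distrib]
  exact Finset.sum_le_sum fun i _ => Int.natAbs_add_le _ _

lemma l1norm_sub_le_add (u v w : Fin d → ℤ) :
    l1norm (u - w) ≤ l1norm (u - v) + l1norm (v - w) := by
  simpa using l1norm_add_le (u - v) (v - w)

lemma natAbs_le_l1norm (v : Fin d → ℤ) (i : Fin d) : (v i).natAbs ≤ l1norm v :=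
  Finset.single_le_sum (f := fun j => (v j).natAbs) (fun _ _ => Nat.zero_le _)
    (Finset.mem_univ i)

lemma l1norm_le_mul_of_natAbs_le {v : Fin d → ℤ} {c : ℕ} (h : ∀ i, (v i).natAbs ≤ c) :
    l1norm v ≤ d * c := by
  simpa [l1norm] using Finset.sum_le_card_nsmul Finset.univ (fun i => (v i).natAbs) c fun i _ => h i

end L1

section McShane

variable {d : ℕ} {R : Set (Fin d → ℤ)} {h : (Fin d → ℤ) → ℤ} {L : ℕ}

noncomputable def mcShane (R : Set (Fin d → ℤ)) (h : (Fin d → ℤ) → ℤ) (L : ℕ)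
    (v : Fin d → ℤ) : ℤ :=
  sSup ((fun u => h u - L * l1norm (v - u)) '' R)

lemma mcShane_bddAbove (hR : R.Nonempty)
    (hh : ∀ u ∈ R, ∀ w ∈ R, h u - h w ≤ L * l1norm (u - w)) (v : Fin d → ℤ) :
    BddAbove ((fun u => h u - L * l1norm (v - u)) '' R) := by
  obtain ⟨w, hw⟩ := hR
  refine ⟨h w + L * l1norm (v - w), ?_⟩
  rintro _ ⟨u, hu, rfl⟩
  have htri : (l1norm (u - w) : ℤ) ≤ l1norm (v - u) + l1norm (v - w) := by
    have := l1norm_sub_le_add u v w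
    rw [l1norm_sub_comm u v] at this
    exact_mod_cast this
  have := hh u hu w hw
  nlinarith

lemma le_mcShane (hR : R.Nonempty)
    (hh : ∀ u ∈ R, ∀ w ∈ R, h u - h w ≤ L * l1norm (u - w)) {u : Fin d → ℤ} (hu : u ∈ R)
    (v : Fin d → ℤ) : h u - L * l1norm (v - u) ≤ mcShane R h L v :=
  le_csSup (mcShane_bddAbove hR hh v) ⟨u, hu, rfl⟩

lemma mcShane_eq_of_mem (hh : ∀ u ∈ R, ∀ w ∈ R, h u - h w ≤ L * l1norm (u - w))
    {v : Fin d → ℤ} (hv : v ∈ R) : mcShane R h L v = h v := by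
  refine le_antisymm (csSup_le ⟨_, v, hv, rfl⟩ ?_) ?_
  · rintro _ ⟨u, hu, rfl⟩
    have := hh u hu v hv
    rw [l1norm_sub_comm] at this
    dsimp only
    omega
  · simpa using le_mcShane ⟨v, hv⟩ hh hv v

lemma mcShane_le_add (hR : R.Nonempty)
    (hh : ∀ u ∈ R, ∀ w ∈ R, h u - h w ≤ L * l1norm (u - w)) (v v' : Fin d → ℤ) :
    mcShane R h L v ≤ mcShane R h L v' + L * l1norm (v - v') := by
  refine csSup_le (hR.image _) ?_
  rintro _ ⟨u, hu, rfl⟩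
  have htri : (l1norm (v' - u) : ℤ) ≤ l1norm (v - v') + l1norm (v - u) := by
    have := l1norm_sub_le_add v' v u
    rw [l1norm_sub_comm v' v] at this
    exact_mod_cast this
  have := le_mcShane hR hh hu v'
  nlinarith

lemma mcShane_congr_add (hR : R.Nonempty)
    (hh : ∀ u ∈ R, ∀ w ∈ R, h u - h w ≤ L * l1norm (u - w)) {h' : (Fin d → ℤ) → ℤ} {c : ℤ}
    (hh' : ∀ u ∈ R, h' u = h u + c) (v : Fin d → ℤ) :
    mcShane R h' L v = mcShane R h L v + c := by
  rw [mcShane, mcShane, ← OrderIso.addRight_apply c,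
    (OrderIso.addRight c).map_csSup' (hR.image _) (mcShane_bddAbove hR hh v), Set.image_image]
  refine congrArg sSup (Set.image_congr fun u hu => ?_)
  rw [hh' u hu, OrderIso.addRight_apply]
  ring

lemma mcShane_comp_add_right (R : Set (Fin d → ℤ)) (h : (Fin d → ℤ) → ℤ) (L : ℕ)
    (v w : Fin d → ℤ) :
    mcShane ((· + w) ⁻¹' R) (fun u => h (u + w)) L v = mcShane R h L (v + w) := by
  refine congrArg sSup (Set.ext fun m => ⟨?_, ?_⟩)
  · rintro ⟨u, hu, rfl⟩
    exact ⟨u + w, hu, by simp⟩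
  · rintro ⟨u, hu, rfl⟩
    exact ⟨u - w, by simpa using hu, by simp [sub_sub_eq_add_sub]⟩

end McShane

section Measurability

variable {X ι : Type*} [MeasurableSpace X] [Countable ι]

lemma measurable_of_eqOn_countable_cover {Y : Type*} [MeasurableSpace Y] {f : X → Y}
    {E : ι → Set X} {g : ι → X → Y} (hE : ∀ i, MeasurableSet (E i)) (hg : ∀ i, Measurable (g i))
    (hcover : ∀ x, ∃ i, x ∈ E i) (hfg : ∀ i, Set.EqOn f (g i) (E i)) : Measurable f := by
  intro B hB
  have hpre : f ⁻¹' B = ⋃ i, E i ∩ g i ⁻¹' B := by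
    ext x
    simp only [Set.mem_preimage, Set.mem_iUnion, Set.mem_inter_iff]
    constructor
    · intro hx
      obtain ⟨i, hi⟩ := hcover x
      exact ⟨i, hi, hfg i hi ▸ hx⟩
    · rintro ⟨i, hi, hx⟩
      rwa [hfg i hi]
  rw [hpre]
  exact MeasurableSet.iUnion fun i => (hE i).inter (hg i hB)

lemma measurable_indicator_sSup {P : ι → X → Prop} {f : ι → X → ℤ} {G : Set X}
    (hG : MeasurableSet G) (hf : ∀ u m, MeasurableSet (G ∩ {x | P u x ∧ f u x = m}))
    (hne : ∀ x ∈ G, {u | P u x}.Nonempty) (hbdd : ∀ x ∈ G, BddAbove ((f · x) '' {u | P u x})) :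
    Measurable (G.indicator fun x => sSup ((f · x) '' {u | P u x})) := by
  refine measurable_to_countable' fun m => ?_
  have hlevel : {x | sSup ((f · x) '' {u | P u x}) = m} ∩ G =
      (⋃ u, G ∩ {x | P u x ∧ f u x = m}) ∩
        ⋂ u, ⋂ k, ⋂ (_ : m < k), (G ∩ {x | P u x ∧ f u x = k})ᶜ := by
    ext x
    simp only [Set.mem_inter_iff, Set.mem_ofPred_eq, Set.mem_iUnion, Set.mem_iInter,
      Set.mem_compl_iff]
    constructor
    · rintro ⟨hsup, hx⟩
      obtain ⟨u, hu, hum⟩ := Int.csSup_mem ((hne x hx).image _) (hbdd x hx)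
      refine ⟨⟨u, hx, hu, hum.trans hsup⟩, fun u' k hk ⟨_, hu', hk'⟩ => ?_⟩
      have : f u' x ≤ m := hsup ▸ le_csSup (hbdd x hx) ⟨u', hu', rfl⟩
      omega
    · rintro ⟨⟨u, hx, hu, hum⟩, hub⟩
      refine ⟨le_antisymm (csSup_le ⟨_, u, hu, rfl⟩ ?_) (hum ▸ le_csSup (hbdd x hx) ⟨u, hu, rfl⟩),
        hx⟩
      rintro _ ⟨u', hu', rfl⟩
      by_contra! hlt
      exact hub u' (f u' x) hlt ⟨hx, hu', rfl⟩
  rw [Set.indicator_preimage, Set.ite]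
  refine .union ?_ ((measurable_zero (measurableSet_singleton m)).diff hG)
  simp only [Set.preimage, Set.mem_singleton_iff]
  rw [hlevel]
  exact (MeasurableSet.iUnion fun u => hf u m).inter
    (.iInter fun u => .iInter fun k => .iInter fun _ => (hf u k).compl)

end Measurability

section PartialCocycle

variable {d D : ℕ} {X : Type*} (T : (Fin d → ℤ) → X → X) (U : Set X)
  (α : (Fin d → ℤ) → X → (Fin D → ℤ)) (L : ℕ)

def IsPartialCocycle : Prop :=
  ∀ v w x, x ∈ U → T w x ∈ U → T (v + w) x ∈ U → α (v + w) x = α v (T w x) + α w x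

def returnTimes (x : X) : Set (Fin d → ℤ) := {u | T u x ∈ U}

def lipschitzPoints : Set X :=
  {x | (returnTimes T U x).Nonempty ∧ ∀ u ∈ returnTimes T U x, ∀ w ∈ returnTimes T U x,
    l1norm (α (u - w) (T w x)) ≤ L * l1norm (u - w)}

noncomputable def orbitMcShane (a : Fin d → ℤ) (x : X) (v : Fin d → ℤ) : Fin D → ℤ :=
  fun i => mcShane (returnTimes T U x) (fun u => α (u - a) (T a x) i) L v

open Classical in
noncomputable def extendedCocycle (v : Fin d → ℤ) (x : X) : Fin D → ℤ :=
  if hx : x ∈ lipschitzPoints T U α L then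
    orbitMcShane T U α L hx.1.some x v - orbitMcShane T U α L hx.1.some x 0
  else 0

variable {T U α L}

lemma returnTimes_apply (hT : ∀ u w x, T u (T w x) = T (u + w) x) (w : Fin d → ℤ) (x : X) :
    returnTimes T U (T w x) = (· + w) ⁻¹' returnTimes T U x := by
  ext u
  simp [returnTimes, hT]

lemma apply_mem_lipschitzPoints (hT : ∀ u w x, T u (T w x) = T (u + w) x) {x : X}
    (hx : x ∈ lipschitzPoints T U α L) (w : Fin d → ℤ) : T w x ∈ lipschitzPoints T U α L := by
  obtain ⟨⟨a, ha⟩, hlip⟩ := hx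
  refine ⟨⟨a - w, by simpa [returnTimes_apply hT] using ha⟩, fun u hu u' hu' => ?_⟩
  rw [returnTimes_apply hT] at hu hu'
  have := hlip (u + w) hu (u' + w) hu'
  rwa [add_sub_add_right_eq_sub, ← hT] at this

lemma partialCocycle_zero (hT0 : ∀ x, T 0 x = x) (hα : IsPartialCocycle T U α) {x : X}
    (hx : x ∈ U) : α 0 x = 0 := by
  have h := hα 0 0 x hx (by rwa [hT0]) (by rwa [zero_add, hT0])
  rwa [zero_add, hT0, left_eq_add] at h

lemma partialCocycle_sub_base (hT : ∀ u w x, T u (T w x) = T (u + w) x)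
    (hα : IsPartialCocycle T U α)
    {x : X} {a u w : Fin d → ℤ} (ha : a ∈ returnTimes T U x) (hu : u ∈ returnTimes T U x)
    (hw : w ∈ returnTimes T U x) :
    α (u - a) (T a x) = α (u - w) (T w x) + α (w - a) (T a x) := by
  have h := hα (u - w) (w - a) (T a x) ha (by rwa [hT, sub_add_cancel])
    (by rwa [hT, sub_add_sub_cancel, sub_add_cancel])
  rwa [sub_add_sub_cancel, hT, sub_add_cancel] at h

lemma orbit_potential_lipschitz (hT : ∀ u w x, T u (T w x) = T (u + w) x)
    (hα : IsPartialCocycle T U α)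
    {x : X} (hx : x ∈ lipschitzPoints T U α L) {a : Fin d → ℤ} (ha : a ∈ returnTimes T U x)
    (i : Fin D) : ∀ u ∈ returnTimes T U x, ∀ w ∈ returnTimes T U x,
      α (u - a) (T a x) i - α (w - a) (T a x) i ≤ L * l1norm (u - w) := by
  intro u hu w hw
  rw [partialCocycle_sub_base hT hα ha hu hw, Pi.add_apply, add_sub_cancel_right]
  have := (natAbs_le_l1norm _ i).trans (hx.2 u hu w hw)
  calc _ ≤ ((α (u - w) (T w x) i).natAbs : ℤ) := Int.le_natAbs
    _ ≤ _ := by exact_mod_cast this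

lemma orbitMcShane_sub_eq (hT : ∀ u w x, T u (T w x) = T (u + w) x)
    (hα : IsPartialCocycle T U α)
    {x : X} (hx : x ∈ lipschitzPoints T U α L) {a b : Fin d → ℤ} (ha : a ∈ returnTimes T U x)
    (hb : b ∈ returnTimes T U x) (v : Fin d → ℤ) :
    orbitMcShane T U α L a x v - orbitMcShane T U α L a x 0 =
      orbitMcShane T U α L b x v - orbitMcShane T U α L b x 0 := by
  funext i
  have hshift : ∀ u ∈ returnTimes T U x,
      α (u - a) (T a x) i = α (u - b) (T b x) i + α (b - a) (T a x) i :=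
    fun u hu => congrFun (partialCocycle_sub_base hT hα ha hu hb) i
  simp only [orbitMcShane, Pi.sub_apply,
    mcShane_congr_add hx.1 (orbit_potential_lipschitz hT hα hx hb i) hshift]
  ring

lemma extendedCocycle_eq (hT : ∀ u w x, T u (T w x) = T (u + w) x)
    (hα : IsPartialCocycle T U α)
    {x : X} (hx : x ∈ lipschitzPoints T U α L) {a : Fin d → ℤ} (ha : a ∈ returnTimes T U x)
    (v : Fin d → ℤ) :
    extendedCocycle T U α L v x = orbitMcShane T U α L a x v - orbitMcShane T U α L a x 0 := by
  rw [extendedCocycle, dif_pos hx]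
  exact orbitMcShane_sub_eq hT hα hx hx.1.some_mem ha v

lemma orbitMcShane_apply (hT : ∀ u w x, T u (T w x) = T (u + w) x) (a w : Fin d → ℤ) (x : X)
    (v : Fin d → ℤ) :
    orbitMcShane T U α L (a - w) (T w x) v = orbitMcShane T U α L a x (v + w) := by
  funext i
  simp only [orbitMcShane, returnTimes_apply hT, hT, sub_add_cancel, ← mcShane_comp_add_right,
    sub_sub_eq_add_sub]

lemma extendedCocycle_add (hT : ∀ u w x, T u (T w x) = T (u + w) x)
    (hT0 : ∀ x, T 0 x = x) (hα : IsPartialCocycle T U α)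
    (v w : Fin d → ℤ) (x : X) :
    extendedCocycle T U α L (v + w) x =
      extendedCocycle T U α L v (T w x) + extendedCocycle T U α L w x := by
  by_cases hx : x ∈ lipschitzPoints T U α L
  · obtain ⟨a, ha⟩ := hx.1
    have ha' : a - w ∈ returnTimes T U (T w x) := by simpa [returnTimes_apply hT] using ha
    rw [extendedCocycle_eq hT hα hx ha,
      extendedCocycle_eq hT hα (apply_mem_lipschitzPoints hT hx w) ha',
      extendedCocycle_eq hT hα hx ha, orbitMcShane_apply hT, orbitMcShane_apply hT, zero_add]
    abel
  · have hwx : T w x ∉ lipschitzPoints T U α L := fun h =>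
      hx (by simpa [hT, hT0] using apply_mem_lipschitzPoints hT h (-w))
    simp [extendedCocycle, hx, hwx]

lemma extendedCocycle_eq_of_mem (hT : ∀ u w x, T u (T w x) = T (u + w) x)
    (hT0 : ∀ x, T 0 x = x) (hα : IsPartialCocycle T U α)
    {x : X} (hx : x ∈ lipschitzPoints T U α L) (hxU : x ∈ U) {v : Fin d → ℤ} (hv : T v x ∈ U) :
    extendedCocycle T U α L v x = α v x := by
  have h0 : (0 : Fin d → ℤ) ∈ returnTimes T U x := by simpa [returnTimes, hT0] using hxU
  rw [extendedCocycle_eq hT hα hx h0]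
  funext i
  have hlip := orbit_potential_lipschitz hT hα hx h0 i
  rw [Pi.sub_apply, orbitMcShane, orbitMcShane, mcShane_eq_of_mem hlip hv,
    mcShane_eq_of_mem hlip h0]
  simp [hT0, partialCocycle_zero hT0 hα hxU]

lemma l1norm_extendedCocycle_le (hT : ∀ u w x, T u (T w x) = T (u + w) x)
    (hα : IsPartialCocycle T U α) (v : Fin d → ℤ) (x : X) :
    l1norm (extendedCocycle T U α L v x) ≤ D * (L * l1norm v) := by
  refine l1norm_le_mul_of_natAbs_le fun i => ?_
  by_cases hx : x ∈ lipschitzPoints T U α L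
  · obtain ⟨a, ha⟩ := hx.1
    have hlip := orbit_potential_lipschitz hT hα hx ha i
    have h1 := mcShane_le_add hx.1 hlip v 0
    have h2 := mcShane_le_add hx.1 hlip 0 v
    rw [sub_zero] at h1
    rw [l1norm_sub_comm, sub_zero] at h2
    rw [extendedCocycle_eq hT hα hx ha, Pi.sub_apply]
    simp only [orbitMcShane]
    omega
  · simp [extendedCocycle, hx]

end PartialCocycle

section MeasurableExtension

variable {d D : ℕ} {X : Type*} [MeasurableSpace X] {T : (Fin d → ℤ) → X → X} {U : Set X}
  {α : (Fin d → ℤ) → X → (Fin D → ℤ)} {L : ℕ}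

lemma measurableSet_partialCocycle_mem
    (hαmeas : ∀ v g, MeasurableSet {x | x ∈ U ∧ T v x ∈ U ∧ α v x = g})
    (v : Fin d → ℤ) (Q : Set (Fin D → ℤ)) :
    MeasurableSet {x | x ∈ U ∧ T v x ∈ U ∧ α v x ∈ Q} := by
  have h : {x | x ∈ U ∧ T v x ∈ U ∧ α v x ∈ Q} =
      ⋃ g ∈ Q, {x | x ∈ U ∧ T v x ∈ U ∧ α v x = g} := by
    ext x
    simp
  rw [h]
  exact .biUnion Q.to_countable fun g _ => hαmeas v g

lemma measurableSet_lipschitzPoints (hT : ∀ u w x, T u (T w x) = T (u + w) x)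
    (hTm : ∀ u, Measurable (T u)) (hU : MeasurableSet U)
    (hαmeas : ∀ v g, MeasurableSet {x | x ∈ U ∧ T v x ∈ U ∧ α v x = g}) :
    MeasurableSet (lipschitzPoints T U α L) := by
  have h : lipschitzPoints T U α L = (⋃ u, T u ⁻¹' U) ∩ ⋂ u, ⋂ w,
      (T u ⁻¹' U ∩ T w ⁻¹' U)ᶜ ∪ T w ⁻¹' {y | y ∈ U ∧ T (u - w) y ∈ U ∧
        α (u - w) y ∈ {g | l1norm g ≤ L * l1norm (u - w)}} := by
    ext x
    simp only [lipschitzPoints, returnTimes, Set.mem_ofPred_eq, Set.mem_inter_iff,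
      Set.mem_iUnion, Set.mem_iInter, Set.mem_union, Set.mem_compl_iff, Set.mem_preimage, hT,
      sub_add_cancel]
    refine and_congr Iff.rfl ⟨fun h u w => ?_, fun h u hu w hw => ?_⟩
    · by_cases hu : T u x ∈ U <;> by_cases hw : T w x ∈ U <;> simp_all
    · simpa [hu, hw] using h u w
  rw [h]
  exact (MeasurableSet.iUnion fun u => hTm u hU).inter <| .iInter fun u => .iInter fun w =>
    ((hTm u hU).inter (hTm w hU)).compl.union (hTm w (measurableSet_partialCocycle_mem hαmeas _ _))

lemma measurable_indicator_orbitMcShane (hT : ∀ u w x, T u (T w x) = T (u + w) x)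
    (hTm : ∀ u, Measurable (T u)) (hU : MeasurableSet U) (hα : IsPartialCocycle T U α)
    (hαmeas : ∀ v g, MeasurableSet {x | x ∈ U ∧ T v x ∈ U ∧ α v x = g})
    (a v : Fin d → ℤ) (i : Fin D) :
    Measurable ((lipschitzPoints T U α L ∩ T a ⁻¹' U).indicator
      fun x => orbitMcShane T U α L a x v i) := by
  have hG := (measurableSet_lipschitzPoints (L := L) hT hTm hU hαmeas).inter (hTm a hU)
  refine measurable_indicator_sSup (P := fun u x => T u x ∈ U)
    (f := fun u x => α (u - a) (T a x) i - L * l1norm (v - u)) hG (fun u m => ?_)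
    (fun x hx => hx.1.1) fun x hx =>
      mcShane_bddAbove hx.1.1 (orbit_potential_lipschitz hT hα hx.1 hx.2 i) v
  have h : lipschitzPoints T U α L ∩ T a ⁻¹' U ∩
        {x | T u x ∈ U ∧ α (u - a) (T a x) i - L * l1norm (v - u) = m} =
      lipschitzPoints T U α L ∩ T a ⁻¹' {y | y ∈ U ∧ T (u - a) y ∈ U ∧
        α (u - a) y ∈ {g | g i - L * l1norm (v - u) = m}} := by
    ext x
    simp only [Set.mem_inter_iff, Set.mem_preimage, Set.mem_ofPred_eq, hT, sub_add_cancel]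
    tauto
  rw [h]
  exact (measurableSet_lipschitzPoints hT hTm hU hαmeas).inter
    (hTm a (measurableSet_partialCocycle_mem hαmeas _ _))

lemma measurable_extendedCocycle (hT : ∀ u w x, T u (T w x) = T (u + w) x)
    (hTm : ∀ u, Measurable (T u)) (hU : MeasurableSet U) (hα : IsPartialCocycle T U α)
    (hαmeas : ∀ v g, MeasurableSet {x | x ∈ U ∧ T v x ∈ U ∧ α v x = g}) (v : Fin d → ℤ) :
    Measurable (extendedCocycle T U α L v) := by
  set G := lipschitzPoints T U α L
  have hG : MeasurableSet G := measurableSet_lipschitzPoints hT hTm hU hαmeas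
  refine measurable_of_eqOn_countable_cover (ι := Option (Fin d → ℤ))
    (E := fun o => o.elim Gᶜ fun a => G ∩ T a ⁻¹' U)
    (g := fun o => o.elim 0 fun a x i => (G ∩ T a ⁻¹' U).indicator
      (fun x => orbitMcShane T U α L a x v i) x -
        (G ∩ T a ⁻¹' U).indicator (fun x => orbitMcShane T U α L a x 0 i) x)
    ?_ ?_ (fun x => ?_) ?_
  · rintro (_ | a)
    exacts [hG.compl, hG.inter (hTm a hU)]
  · rintro (_ | a)
    · exact measurable_const
    · exact measurable_pi_lambda _ fun i =>
        (measurable_indicator_orbitMcShane hT hTm hU hα hαmeas a v i).sub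
          (measurable_indicator_orbitMcShane hT hTm hU hα hαmeas a 0 i)
  · by_cases hx : x ∈ G
    · obtain ⟨a, ha⟩ := hx.1
      exact ⟨some a, hx, ha⟩
    · exact ⟨none, hx⟩
  · rintro (_ | a) x hx
    · simp [extendedCocycle, G, Set.notMem_of_mem_compl hx]
    · replace hx : x ∈ G ∩ T a ⁻¹' U := hx
      funext i
      simp [extendedCocycle_eq hT hα hx.1 hx.2, Set.indicator_of_mem hx]

end MeasurableExtension

section Ergodic

variable {d D : ℕ} {X : Type*} [MeasurableSpace X] {μ : Measure X} {T : (Fin d → ℤ) → X → X}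
  {U : Set X} {α : (Fin d → ℤ) → X → (Fin D → ℤ)}

lemma ae_returnTimes_nonempty [IsProbabilityMeasure μ] (hT : ∀ u w x, T u (T w x) = T (u + w) x)
    (hT0 : ∀ x, T 0 x = x) (hTm : ∀ u, Measurable (T u))
    (herg : ∀ A : Set X, MeasurableSet A →
      (∀ v : Fin d → ℤ, μ (symmDiff (T v ⁻¹' A) A) = 0) → μ A = 0 ∨ μ A = 1)
    (hU : MeasurableSet U) (hUpos : 0 < μ U) :
    ∀ᵐ x ∂μ, (returnTimes T U x).Nonempty := by
  set O := ⋃ u, T u ⁻¹' U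
  have hO : MeasurableSet O := .iUnion fun u => hTm u hU
  have hinv : ∀ w, T w ⁻¹' O = O := by
    intro w
    ext x
    simp only [O, Set.mem_preimage, Set.mem_iUnion, hT]
    exact ⟨fun ⟨u, hu⟩ => ⟨u + w, hu⟩, fun ⟨u, hu⟩ => ⟨u - w, by rwa [sub_add_cancel]⟩⟩
  have hUO : U ⊆ O := fun x hx => Set.mem_iUnion.2 ⟨0, by rwa [Set.mem_preimage, hT0]⟩
  have hO1 : μ O = 1 :=
    (herg O hO fun w => by rw [hinv, symmDiff_self, Set.bot_eq_empty, measure_empty]).resolve_left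
      fun h => hUpos.ne' (measure_mono_null hUO h)
  rw [ae_iff, ← (prob_compl_eq_zero_iff hO).2 hO1]
  congr 1
  ext x
  simp [O, returnTimes, Set.Nonempty]

lemma ae_mem_lipschitzPoints (hT : ∀ u w x, T u (T w x) = T (u + w) x)
    (hTmp : ∀ v, MeasurePreserving (T v) μ μ) (hne : ∀ᵐ x ∂μ, (returnTimes T U x).Nonempty)
    {C : ℝ} {L : ℕ} (hCL : C ≤ L)
    (hbdd : ∀ v, ∀ᵐ x ∂μ, (x ∈ U ∧ T v x ∈ U) → (l1norm (α v x) : ℝ) ≤ C * l1norm v) :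
    ∀ᵐ x ∂μ, x ∈ lipschitzPoints T U α L := by
  have hpair : ∀ u w, ∀ᵐ x ∂μ, T u x ∈ U → T w x ∈ U →
      l1norm (α (u - w) (T w x)) ≤ L * l1norm (u - w) := by
    intro u w
    filter_upwards [(hTmp w).quasiMeasurePreserving.ae (hbdd (u - w))] with x hx hu hw
    have hC := hx ⟨hw, by rwa [hT, sub_add_cancel]⟩
    have : (l1norm (α (u - w) (T w x)) : ℝ) ≤ L * l1norm (u - w) :=
      hC.trans (by gcongr)
    exact_mod_cast this
  filter_upwards [hne, ae_all_iff.2 fun u => ae_all_iff.2 (hpair u)] with x hx hlip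
  exact ⟨hx, fun u hu w hw => hlip u w hu hw⟩

end Ergodic

theorem stmt7_general {d D : ℕ} {X : Type*} [MeasurableSpace X]
    (μ : Measure X) [IsProbabilityMeasure μ]
    -- a measurable μ-preserving action T of ℤ^d
    (T : (Fin d → ℤ) → X → X) (hT0 : T 0 = id)
    (hTadd : ∀ v w : Fin d → ℤ, T (v + w) = T v ∘ T w)
    (hTmp : ∀ v : Fin d → ℤ, MeasurePreserving (T v) μ μ)
    -- ergodicity
    (herg : ∀ A : Set X, MeasurableSet A →
      (∀ v : Fin d → ℤ, μ (symmDiff (T v ⁻¹' A) A) = 0) → μ A = 0 ∨ μ A = 1)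
    -- a ℤ^D-valued partial cocycle (α, U) with μ(U) > 0
    (U : Set X) (hU : MeasurableSet U) (hUpos : 0 < μ U)
    (α : (Fin d → ℤ) → X → (Fin D → ℤ))
    (hαmeas : ∀ (v : Fin d → ℤ) (h : Fin D → ℤ),
      MeasurableSet {x : X | x ∈ U ∧ T v x ∈ U ∧ α v x = h})
    (hαcoc : ∀ (v w : Fin d → ℤ) (x : X), x ∈ U → T w x ∈ U → T (v + w) x ∈ U →
      α (v + w) x = α v (T w x) + α w x)
    -- boundedness of the partial cocycle
    (C : ℝ)
    (hbdd : ∀ v : Fin d → ℤ, ∀ᵐ x ∂μ, (x ∈ U ∧ T v x ∈ U) →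
      (l1norm (α v x) : ℝ) ≤ C * (l1norm v : ℝ)) :
    -- there is a bounded full cocycle extending α a.e.
    ∃ (σ : (Fin d → ℤ) → X → (Fin D → ℤ)) (C' : ℝ),
      (∀ (v : Fin d → ℤ) (h : Fin D → ℤ), MeasurableSet {x : X | σ v x = h}) ∧
      (∀ (v w : Fin d → ℤ) (x : X), σ (v + w) x = σ v (T w x) + σ w x) ∧
      (∀ v : Fin d → ℤ, ∀ᵐ x ∂μ, (x ∈ U ∧ T v x ∈ U) → σ v x = α v x) ∧
      (∀ v : Fin d → ℤ, ∀ᵐ x ∂μ, (l1norm (σ v x) : ℝ) ≤ C' * (l1norm v : ℝ)) := by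
  have hT : ∀ u w x, T u (T w x) = T (u + w) x := fun u w x => by rw [hTadd]; rfl
  have hT0' : ∀ x, T 0 x = x := fun x => by rw [hT0]; rfl
  have hTm : ∀ u, Measurable (T u) := fun u => (hTmp u).measurable
  obtain ⟨L, hCL⟩ := exists_nat_ge C
  have hgood : ∀ᵐ x ∂μ, x ∈ lipschitzPoints T U α L := ae_mem_lipschitzPoints hT hTmp
    (ae_returnTimes_nonempty hT hT0' hTm herg hU hUpos) hCL hbdd
  refine ⟨extendedCocycle T U α L, D * L,
    fun v g => measurable_extendedCocycle hT hTm hU hαcoc hαmeas v (measurableSet_singleton g),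
    extendedCocycle_add hT hT0' hαcoc, fun v => ?_, fun v => .of_forall fun x => ?_⟩
  · filter_upwards [hgood] with x hx ⟨hxU, hvx⟩
    exact extendedCocycle_eq_of_mem hT hT0' hαcoc hx hxU hvx
  · rw [mul_assoc]
    exact_mod_cast l1norm_extendedCocycle_le hT hαcoc v x

theorem stmt7 {d D : ℕ} {X : Type*} [MeasurableSpace X] [StandardBorelSpace X]
    (μ : Measure X) [IsProbabilityMeasure μ]
    -- a measurable μ-preserving action T of ℤ^d
    (T : (Fin d → ℤ) → X → X) (hT0 : T 0 = id)
    (hTadd : ∀ v w : Fin d → ℤ, T (v + w) = T v ∘ T w)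
    (hTmp : ∀ v : Fin d → ℤ, MeasurePreserving (T v) μ μ)
    -- ergodicity
    (herg : ∀ A : Set X, MeasurableSet A →
      (∀ v : Fin d → ℤ, μ (symmDiff (T v ⁻¹' A) A) = 0) → μ A = 0 ∨ μ A = 1)
    -- a ℤ^D-valued partial cocycle (α, U) with μ(U) > 0
    (U : Set X) (hU : MeasurableSet U) (hUpos : 0 < μ U)
    (α : (Fin d → ℤ) → X → (Fin D → ℤ))
    (hαmeas : ∀ (v : Fin d → ℤ) (h : Fin D → ℤ),
      MeasurableSet {x : X | x ∈ U ∧ T v x ∈ U ∧ α v x = h})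
    (hαcoc : ∀ (v w : Fin d → ℤ) (x : X), x ∈ U → T w x ∈ U → T (v + w) x ∈ U →
      α (v + w) x = α v (T w x) + α w x)
    -- boundedness of the partial cocycle
    (C : ℝ)
    (hbdd : ∀ v : Fin d → ℤ, ∀ᵐ x ∂μ, (x ∈ U ∧ T v x ∈ U) →
      (l1norm (α v x) : ℝ) ≤ C * (l1norm v : ℝ)) :
    -- there is a bounded full cocycle extending α a.e.
    ∃ (σ : (Fin d → ℤ) → X → (Fin D → ℤ)) (C' : ℝ),
      (∀ (v : Fin d → ℤ) (h : Fin D → ℤ), MeasurableSet {x : X | σ v x = h}) ∧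
      (∀ (v w : Fin d → ℤ) (x : X), σ (v + w) x = σ v (T w x) + σ w x) ∧
      (∀ v : Fin d → ℤ, ∀ᵐ x ∂μ, (x ∈ U ∧ T v x ∈ U) → σ v x = α v x) ∧
      (∀ v : Fin d → ℤ, ∀ᵐ x ∂μ, (l1norm (σ v x) : ℝ) ≤ C' * (l1norm v : ℝ)) :=
  stmt7_general μ T hT0 hTadd hTmp herg U hU hUpos α hαmeas hαcoc C hbdd
end

section
/- Let G be a finitely generated group of super-linear growth, with word length |·|_G, balls B_G(r), and right-invariant word metric d_G. Then there is a finite constant c with the following property: for any real r ≥ 1, any nonempty connected (1,r)-Følner set F ⊆ G, and any nonempty subset A ⊆ F, there is a pair (V,E) with V ⊆ G finite, every point of A within d_G-distance 4r of V, (V,E) a connected graph, and wt_{d_G}(V,E) ≤ c|F|/r. -/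
open Filter
open scoped Pointwise

/-- The right-invariant word metric `d_G(g,h) = |g h⁻¹|_G`. -/
noncomputable def wordDist {G : Type*} [Group G] (S : Set G) (g h : G) : ℕ :=
  wordLength S (g * h⁻¹)

/-- The ball `B_G(r) = {g : |g|_G ≤ r}`. -/
def wordBall {G : Type*} [Group G] (S : Set G) (r : ℝ) : Set G :=
  {g : G | (wordLength S g : ℝ) ≤ r}

/-- `F` is an (ε,r)-Følner set: finite, nonempty, with `|(B_G(r)·F) \ F| ≤ ε|F|`. -/
def IsFolner {G : Type*} [Group G] (S : Set G) (ε r : ℝ) (F : Set G) : Prop :=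
  F.Finite ∧ F.Nonempty ∧
    (((wordBall S r * F) \ F).ncard : ℝ) ≤ ε * (F.ncard : ℝ)

/-- `E` is r-connected for the word metric. -/
def RConnected {G : Type*} [Group G] (S : Set G) (r : ℝ) (E : Set G) : Prop :=
  ∀ g ∈ E, ∀ h ∈ E, Relation.ReflTransGen
    (fun a b => a ∈ E ∧ b ∈ E ∧ (wordDist S a b : ℝ) ≤ r) g h

/-- One step along an (undirected) edge of the graph with edge set `E`. -/
def edgeStep {Z : Type*} (E : Finset (Z × Z)) (a b : Z) : Prop :=
  (a, b) ∈ E ∨ (b, a) ∈ E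

/-!
Super-linear growth forces quadratic growth, `n ^ 2 ≤ 16 |B(n)|`. Otherwise some sphere `S(k)`
has `m ≤ k / 8` elements. Subwords of shortlex geodesic words are shortlex geodesic, so any `m + 1`
consecutive length-`k` subwords of such a word, being determined by their values in `S(k)`, contain
two equal ones; this gives the word a period `≤ m` on every window, the periods glue to a single
one, and a shortlex word of length `n ≥ 2k` is then determined by its first and last `4m` letters.
Hence `|S(n)| ≤ |B(k)|²` and the growth would be linear.

For a `(1, r)`-Følner set `F` and `ρ = ⌊r⌋`, a maximal `2ρ`-separated subset `V ⊆ F` has disjoint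
translates `B(ρ) v` inside `B(ρ) F`, which has at most `2 |F|` elements, so `|V| ρ² ≤ 32 |F|`.
As `F` is connected and `V` is `2ρ`-dense in it, `V` is `(4ρ + 1)`-connected, and both orientations
of the edges of a spanning tree give a graph of weight at most `2 |V| (4ρ + 1) ≤ 640 |F| / r`.
-/

theorem Set.Finite.finite_lists_length_le {α : Type*} {S : Set α} (hS : S.Finite) (n : ℕ) :
    {w : List α | (∀ s ∈ w, s ∈ S) ∧ w.length ≤ n}.Finite := by
  have : Finite S := hS.to_subtype
  refine ((List.finite_length_le S n).image (List.map Subtype.val)).subset fun w ⟨hw, hlen⟩ => ?_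
  lift w to List S using hw
  exact ⟨w, by simpa using hlen, rfl⟩

theorem List.lex_append_of_length_le {α : Type*} {r : α → α → Prop} {v v' : List α}
    (h : List.Lex r v v') (hlen : v'.length ≤ v.length) (x x' : List α) :
    List.Lex r (v ++ x) (v' ++ x') := by
  induction h with
  | nil => simp at hlen
  | cons _ ih => exact .cons (ih (by simpa using hlen))
  | rel hab => exact .rel hab

section Periods

variable {α : Type*} {v : ℕ → α}

def HasPeriodOn (v : ℕ → α) (p a b : ℕ) : Prop :=
  ∀ i, a ≤ i → i + p < b → v i = v (i + p)

theorem HasPeriodOn.mono {p a b a' b' : ℕ} (h : HasPeriodOn v p a b) (ha : a ≤ a') (hb : b' ≤ b) :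
    HasPeriodOn v p a' b' :=
  fun i hi hip => h i (ha.trans hi) (hip.trans_le hb)

theorem HasPeriodOn.extend {p e x a b c : ℕ} (hp : HasPeriodOn v p x b) (he : HasPeriodOn v e a c)
    (he0 : 0 < e) (hxa : x ≤ a) (hab : a + p + e ≤ b) : HasPeriodOn v p x c := by
  intro i
  induction i using Nat.strong_induction_on with
  | _ i ih =>
    intro hxi hic
    by_cases hib : i + p < b
    · exact hp i hxi hib
    have hback : ∀ j, a ≤ j - e → j < c → j ≥ e → v (j - e) = v j := fun j hj hjc hje => by
      simpa [Nat.sub_add_cancel hje] using he (j - e) hj (by omega)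
    rw [← hback i (by omega) (by omega) (by omega), ← hback (i + p) (by omega) hic (by omega),
      show i + p - e = i - e + p by omega]
    exact ih (i - e) (by omega) (by omega) (by omega)

theorem HasPeriodOn.of_windows {m k n : ℕ} (hkm : 3 * m + 1 ≤ k) (hkn : k + m ≤ n)
    (window : ∀ i, i + k + m ≤ n → ∃ e, 0 < e ∧ e ≤ m ∧ HasPeriodOn v e (i + m) (i + k)) :
    ∃ e, 0 < e ∧ e ≤ m ∧ HasPeriodOn v e m (n - m) := by
  obtain ⟨e, he0, hem, he⟩ := window 0 (by omega)
  simp only [zero_add] at he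
  have grow : ∀ j, j + k + m ≤ n → HasPeriodOn v e m (j + k) := by
    intro j
    induction j with
    | zero => simpa using fun _ => he
    | succ j ih =>
      intro hj
      obtain ⟨e', he'0, he'm, he'⟩ := window (j + 1) hj
      exact (ih (by omega)).extend he' he'0 (by omega) (by omega)
  exact ⟨e, he0, hem, (grow (n - k - m) (by omega)).mono le_rfl (by omega)⟩

theorem HasPeriodOn.eqOn_of_eqOn_ends {w : ℕ → α} {m n e₁ e₂ : ℕ} (h8 : 8 * m ≤ n)
    (hv : HasPeriodOn v e₁ m (n - m)) (hw : HasPeriodOn w e₂ m (n - m))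
    (he₁ : 0 < e₁) (he₁m : e₁ ≤ m) (he₂ : 0 < e₂) (he₂m : e₂ ≤ m)
    (hpre : ∀ i < 4 * m, v i = w i) (hsuf : ∀ i, n - 4 * m ≤ i → i < n → v i = w i) :
    ∀ i < n, v i = w i := by
  have hv' : HasPeriodOn v e₂ (2 * m) (n - m) := by
    refine HasPeriodOn.extend (a := 2 * m) (b := 4 * m) (fun i hi hie => ?_)
      (hv.mono (by omega) le_rfl) he₁ le_rfl (by omega)
    rw [hpre i (by omega), hpre (i + e₂) (by omega)]
    exact hw i (by omega) (by omega)
  intro i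
  induction i using Nat.strong_induction_on with
  | _ i ih =>
    intro hin
    by_cases hlo : i < 4 * m
    · exact hpre i hlo
    by_cases hhi : n - 4 * m ≤ i
    · exact hsuf i hhi hin
    have hback : ∀ u : ℕ → α, HasPeriodOn u e₂ (2 * m) (n - m) → u (i - e₂) = u i := fun u hu => by
      simpa [Nat.sub_add_cancel (show e₂ ≤ i by omega)] using hu (i - e₂) (by omega) (by omega)
    rw [← hback v hv', ← hback w (hw.mono (by omega) le_rfl)]
    exact ih (i - e₂) (by omega) (by omega)

end Periods

theorem not_tendsto_natCast_div_atTop_of_le_add_mul {f : ℕ → ℕ} {A C : ℕ}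
    (h : ∀ n, f n ≤ A + n * C) : ¬Tendsto (fun n : ℕ => (f n : ℝ) / n) atTop atTop := by
  intro htends
  obtain ⟨n, hn, hn1⟩ :=
    ((htends.eventually_gt_atTop ((A : ℝ) + C)).and (eventually_ge_atTop 1)).exists
  have hn0 : (0 : ℝ) < n := by exact_mod_cast hn1
  rw [lt_div_iff₀ hn0] at hn
  have hfn : (f n : ℝ) ≤ A + n * C := by exact_mod_cast h n
  nlinarith [(by exact_mod_cast hn1 : (1 : ℝ) ≤ n), (Nat.cast_nonneg A : (0 : ℝ) ≤ A)]

theorem infinite_of_tendsto_ncard_div_atTop {G : Type*} {B : ℕ → Set G}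
    (hB : Tendsto (fun n : ℕ => ((B n).ncard : ℝ) / n) atTop atTop) : Infinite G := by
  refine (finite_or_infinite G).resolve_left fun _ => ?_
  exact not_tendsto_natCast_div_atTop_of_le_add_mul (A := Nat.card G) (C := 0)
    (fun n => by simpa using Set.ncard_le_card (B n)) hB

theorem Finset.exists_independent_dominating_subset {α : Type*} {R : α → α → Prop}
    (hR : ∀ a, R a a) (hRs : ∀ a b, R a b → R b a) (F : Finset α) :
    ∃ V ⊆ F, (V : Set α).Pairwise (fun u v => ¬R u v) ∧ ∀ a ∈ F, ∃ v ∈ V, R a v := by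
  classical
  obtain ⟨V, hVC, hVmax⟩ := Finset.exists_max_image
    (F.powerset.filter fun V : Finset α => (V : Set α).Pairwise fun u v => ¬R u v) Finset.card
    ⟨∅, by simp⟩
  rw [Finset.mem_filter, Finset.mem_powerset] at hVC
  refine ⟨V, hVC.1, hVC.2, fun a ha => ?_⟩
  by_contra! hfar
  have haV : a ∉ V := fun haV => hfar a haV (hR a)
  have hins : insert a V ∈
      F.powerset.filter fun V : Finset α => (V : Set α).Pairwise fun u v => ¬R u v := by
    rw [Finset.mem_filter, Finset.mem_powerset, Finset.coe_insert, Set.pairwise_insert]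
    exact ⟨Finset.insert_subset ha hVC.1, hVC.2,
      fun v hv _ => ⟨hfar v hv, fun h => hfar v hv (hRs _ _ h)⟩⟩
  have := hVmax _ hins
  rw [Finset.card_insert_of_notMem haV] at this
  omega

theorem exists_spanning_edges {Z : Type*} {R : Z → Z → Prop} (hR : ∀ a b, R a b → R b a)
    {V : Finset Z} (hV : V.Nonempty)
    (hconn : ∀ u ∈ V, ∀ v ∈ V, Relation.ReflTransGen (fun a b => a ∈ V ∧ b ∈ V ∧ R a b) u v) :
    ∃ E : Finset (Z × Z), (∀ e ∈ E, e.1 ∈ V ∧ e.2 ∈ V ∧ R e.1 e.2) ∧ E.card ≤ 2 * V.card ∧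
      ∀ u ∈ V, ∀ v ∈ V, Relation.ReflTransGen (edgeStep E) u v := by
  classical
  let H : SimpleGraph V := SimpleGraph.fromRel fun u v => R u v
  have hreach : ∀ a b, Relation.ReflTransGen (fun a b => a ∈ V ∧ b ∈ V ∧ R a b) a b →
      ∀ (ha : a ∈ V) (hb : b ∈ V), H.Reachable ⟨a, ha⟩ ⟨b, hb⟩ := by
    intro a b hab
    induction hab with
    | refl => exact fun _ _ => .rfl
    | @tail c b _ hcb ih =>
      intro ha hb
      refine (ih ha hcb.1).trans ?_
      by_cases hcb' : c = b
      · subst hcb'; rfl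
      · exact SimpleGraph.Adj.reachable ((SimpleGraph.fromRel_adj _ _ _).2
          ⟨fun h => hcb' (congrArg Subtype.val h), .inl hcb.2.2⟩)
  have : Nonempty V := hV.to_subtype
  have hH : H.Connected := (SimpleGraph.connected_iff _).2
    ⟨fun u v => hreach _ _ (hconn u u.2 v v.2) _ _, inferInstance⟩
  obtain ⟨T, hTH, hT⟩ := hH.exists_isTree_le
  refine ⟨Finset.univ.image fun d : T.Dart => ((d.fst : Z), (d.snd : Z)), ?_, ?_, ?_⟩
  · simp only [Finset.mem_image, Finset.mem_univ, true_and, forall_exists_index]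
    rintro _ d rfl
    obtain ⟨-, h | h⟩ := (SimpleGraph.fromRel_adj _ _ _).1 (hTH d.adj)
    exacts [⟨d.fst.2, d.snd.2, h⟩, ⟨d.fst.2, d.snd.2, hR _ _ h⟩]
  · calc _ ≤ Fintype.card T.Dart := Finset.card_image_le.trans (by simp)
      _ = 2 * T.edgeFinset.card := T.dart_card_eq_twice_card_edges
      _ ≤ 2 * V.card := by
        have := hT.card_edgeFinset
        simp only [Fintype.card_coe] at this
        omega
  · intro u hu v hv
    have := (SimpleGraph.reachable_iff_reflTransGen _ _).1 (hT.connected ⟨u, hu⟩ ⟨v, hv⟩)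
    refine this.lift Subtype.val fun a b hab => .inl ?_
    exact Finset.mem_image.2 ⟨⟨(a, b), hab⟩, Finset.mem_univ _, rfl⟩

namespace WordMetric

variable {G : Type*} [Group G] {S : Set G}

theorem submonoid_closure_eq_top (hSsym : ∀ s ∈ S, s⁻¹ ∈ S)
    (hSgen : Subgroup.closure S = ⊤) : Submonoid.closure S = ⊤ := by
  have hinv : S⁻¹ ⊆ S := fun s hs => inv_inv s ▸ hSsym _ hs
  rw [← Set.union_eq_left.2 hinv, ← Subgroup.closure_toSubmonoid, hSgen]
  rfl

theorem wordLength_prod_le_length {w : List G} (hw : ∀ s ∈ w, s ∈ S) :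
    wordLength S w.prod ≤ w.length :=
  Nat.sInf_le ⟨w, rfl, hw, rfl⟩

@[simp] theorem wordLength_one : wordLength S (1 : G) = 0 :=
  Nat.le_zero.1 (wordLength_prod_le_length (w := []) (by simp))

@[simp] theorem mem_wordBall_natCast {n : ℕ} {g : G} : g ∈ wordBall S n ↔ wordLength S g ≤ n :=
  Nat.cast_le (α := ℝ)

theorem wordBall_eq_natFloor {r : ℝ} (hr : 0 ≤ r) : wordBall S r = wordBall S ⌊r⌋₊ := by
  ext g
  simp [wordBall, Nat.le_floor_iff hr]

variable (hgen : Submonoid.closure S = ⊤)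
include hgen

theorem exists_word_length_eq_wordLength (g : G) :
    ∃ w : List G, (∀ s ∈ w, s ∈ S) ∧ w.prod = g ∧ w.length = wordLength S g := by
  obtain ⟨w, hw, rfl⟩ :=
    Submonoid.exists_list_of_mem_closure (hgen ▸ Submonoid.mem_top g : g ∈ Submonoid.closure S)
  obtain ⟨n, ⟨v, rfl, hv, hvw⟩, hmin⟩ : ∃ n ∈ {n | ∃ v : List G, v.length = n ∧
      (∀ s ∈ v, s ∈ S) ∧ v.prod = w.prod}, n = wordLength S w.prod :=
    ⟨_, Nat.sInf_mem ⟨w.length, w, rfl, hw, rfl⟩, rfl⟩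
  exact ⟨v, hv, hvw, hmin⟩

theorem wordLength_mul_le (g h : G) : wordLength S (g * h) ≤ wordLength S g + wordLength S h := by
  obtain ⟨v, hv, rfl, hvl⟩ := exists_word_length_eq_wordLength hgen g
  obtain ⟨w, hw, rfl, hwl⟩ := exists_word_length_eq_wordLength hgen h
  rw [← hvl, ← hwl, ← List.length_append, ← List.prod_append]
  exact wordLength_prod_le_length fun s hs => (List.mem_append.1 hs).elim (hv s) (hw s)

theorem wordDist_triangle (g h k : G) : wordDist S g k ≤ wordDist S g h + wordDist S h k := by
  rw [wordDist, show g * k⁻¹ = g * h⁻¹ * (h * k⁻¹) by group]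
  exact wordLength_mul_le hgen _ _

theorem finite_wordBall (hS : S.Finite) (n : ℕ) : (wordBall S n).Finite := by
  refine ((hS.finite_lists_length_le n).image List.prod).subset fun g hg => ?_
  obtain ⟨w, hw, rfl, hlen⟩ := exists_word_length_eq_wordLength hgen g
  exact ⟨w, ⟨hw, hlen ▸ mem_wordBall_natCast.1 hg⟩, rfl⟩

theorem wordLength_inv (hSsym : ∀ s ∈ S, s⁻¹ ∈ S) (g : G) : wordLength S g⁻¹ = wordLength S g := by
  have key : ∀ g : G, wordLength S g⁻¹ ≤ wordLength S g := fun g => by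
    obtain ⟨w, hw, rfl, hlen⟩ := exists_word_length_eq_wordLength hgen g
    rw [← hlen, List.prod_inv_reverse]
    refine (wordLength_prod_le_length fun s hs => ?_).trans (by simp)
    obtain ⟨t, ht, rfl⟩ := List.mem_map.1 (List.mem_reverse.1 hs)
    exact hSsym t (hw t ht)
  exact (key g).antisymm (by simpa using key g⁻¹)

theorem wordDist_comm (hSsym : ∀ s ∈ S, s⁻¹ ∈ S) (g h : G) : wordDist S g h = wordDist S h g := by
  rw [wordDist, wordDist, ← wordLength_inv hgen hSsym, mul_inv_rev, inv_inv]

section NormalForm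

def IsGeodesic (S : Set G) (w : List G) : Prop :=
  (∀ s ∈ w, s ∈ S) ∧ w.length = wordLength S w.prod

theorem IsGeodesic.infix {w v : List G} (hw : IsGeodesic S w) (hvw : v <:+: w) :
    IsGeodesic S v := by
  obtain ⟨u, x, rfl⟩ := hvw
  have hu : ∀ s ∈ u, s ∈ S := fun s hs => hw.1 s (by simp [hs])
  have hv : ∀ s ∈ v, s ∈ S := fun s hs => hw.1 s (by simp [hs])
  have hx : ∀ s ∈ x, s ∈ S := fun s hs => hw.1 s (by simp [hs])
  refine ⟨hv, le_antisymm ?_ (wordLength_prod_le_length hv)⟩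
  have hu := wordLength_prod_le_length hu
  have hx := wordLength_prod_le_length hx
  have hsplit := (wordLength_mul_le hgen (u.prod * v.prod) x.prod).trans
    (Nat.add_le_add_right (wordLength_mul_le hgen u.prod v.prod) _)
  rw [← List.prod_append, ← List.prod_append, ← hw.2] at hsplit
  simp only [List.length_append] at hsplit
  omega

theorem exists_isGeodesic (g : G) : ∃ w, IsGeodesic S w ∧ w.prod = g := by
  obtain ⟨w, hw, rfl, hlen⟩ := exists_word_length_eq_wordLength hgen g
  exact ⟨w, ⟨hw, hlen⟩, rfl⟩

variable [LinearOrder G]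

/-- `w` is the shortlex normal form of its product. -/
def IsNormalForm (S : Set G) (w : List G) : Prop :=
  IsGeodesic S w ∧ ∀ w', IsGeodesic S w' → w'.prod = w.prod → w ≤ w'

theorem IsNormalForm.infix {w v : List G} (hw : IsNormalForm S w) (hvw : v <:+: w) :
    IsNormalForm S v := by
  refine ⟨hw.1.infix hgen hvw, fun v' hv' hprod => le_of_not_gt fun hlt => ?_⟩
  have hlen : v'.length = v.length := by rw [hv'.2, hprod, (hw.1.infix hgen hvw).2]
  obtain ⟨u, x, rfl⟩ := hvw
  have hw' : IsGeodesic S (u ++ v' ++ x) := by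
    refine ⟨fun s hs => ?_, ?_⟩
    · simp only [List.mem_append] at hs
      rcases hs with (hs | hs) | hs
      exacts [hw.1.1 s (by simp [hs]), hv'.1 s hs, hw.1.1 s (by simp [hs])]
    · rw [List.length_append, List.length_append, hlen, ← List.length_append,
        ← List.length_append, hw.1.2]
      simp [hprod]
  refine (hw.2 _ hw' (by simp [hprod])).not_gt ?_
  show List.Lex (· < ·) _ _
  simpa only [List.append_assoc] using
    List.Lex.append_left _ (List.lex_append_of_length_le hlt hlen.ge x x) u

omit hgen in
theorem IsNormalForm.eq_of_prod_eq {w w' : List G} (hw : IsNormalForm S w)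
    (hw' : IsNormalForm S w') (h : w.prod = w'.prod) : w = w' :=
  le_antisymm (hw.2 w' hw'.1 h.symm) (hw'.2 w hw.1 h)

theorem exists_isNormalForm (hS : S.Finite) (g : G) : ∃ w, IsNormalForm S w ∧ w.prod = g := by
  have hfin : {w : List G | IsGeodesic S w ∧ w.prod = g}.Finite :=
    (hS.finite_lists_length_le (wordLength S g)).subset fun w ⟨hw, hwg⟩ =>
      ⟨hw.1, (hw.2.trans (hwg ▸ rfl)).le⟩
  obtain ⟨w, ⟨hw, hwg⟩, hmin⟩ := Set.exists_min_image _ id hfin (exists_isGeodesic hgen g)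
  exact ⟨w, ⟨hw, fun w' hw' h => hmin w' ⟨hw', h.trans hwg⟩⟩, hwg⟩

end NormalForm

section Growth

def wordSphere (S : Set G) (n : ℕ) : Set G := {g | wordLength S g = n}

omit hgen in
@[simp] theorem mem_wordSphere {n : ℕ} {g : G} : g ∈ wordSphere S n ↔ wordLength S g = n :=
  Iff.rfl

theorem finite_wordSphere (hS : S.Finite) (n : ℕ) : (wordSphere S n).Finite :=
  (finite_wordBall hgen hS n).subset fun _ hg => mem_wordBall_natCast.2 (le_of_eq hg)

theorem IsNormalForm.hasPeriodOn_window [LinearOrder G] (hS : S.Finite) {w : List G}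
    (hw : IsNormalForm S w) {k m i : ℕ} (hσ : (wordSphere S k).ncard ≤ m)
    (hlen : i + k + m ≤ w.length) :
    ∃ e, 0 < e ∧ e ≤ m ∧ HasPeriodOn (fun t => w[t]?) e (i + m) (i + k) := by
  set W : ℕ → List G := fun j => (w.drop (i + j)).take k
  have hW : ∀ j ≤ m, IsNormalForm S (W j) ∧ (W j).prod ∈ wordSphere S k := fun j hj => by
    have hWj := hw.infix hgen
      ((List.take_prefix k (w.drop (i + j))).isInfix.trans (List.drop_suffix (i + j) w).isInfix)
    refine ⟨hWj, ?_⟩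
    rw [mem_wordSphere, ← hWj.1.2]
    simp only [List.length_take, List.length_drop]
    omega
  have hcard : ((finite_wordSphere hgen hS k).toFinset).card < (Finset.range (m + 1)).card := by
    rw [← Set.ncard_eq_toFinset_card _ (finite_wordSphere hgen hS k), Finset.card_range]
    omega
  obtain ⟨j₁, hj₁, j₂, hj₂, hne, heq⟩ := Finset.exists_ne_map_eq_of_card_lt_of_maps_to hcard
    (f := fun j => (W j).prod) fun j hj => by
      simpa using (hW j (Nat.lt_succ_iff.1 (Finset.mem_range.1 hj))).2
  rw [Finset.mem_range, Nat.lt_succ_iff] at hj₁ hj₂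
  wlog hlt : j₁ < j₂ generalizing j₁ j₂
  · exact this j₂ hj₂ j₁ hj₁ hne.symm heq.symm (by omega)
  have hWeq : W j₁ = W j₂ := (hW j₁ hj₁).1.eq_of_prod_eq (hW j₂ hj₂).1 heq
  refine ⟨j₂ - j₁, by omega, by omega, fun x hx hxe => ?_⟩
  have := congrArg (·[x - (i + j₁)]?) hWeq
  simp only [W, List.getElem?_take_of_lt (show x - (i + j₁) < k by omega),
    List.getElem?_drop] at this
  simpa [show i + j₁ + (x - (i + j₁)) = x by omega,
    show i + j₂ + (x - (i + j₁)) = x + (j₂ - j₁) by omega] using this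

theorem IsNormalForm.hasPeriodOn [LinearOrder G] (hS : S.Finite) {w : List G}
    (hw : IsNormalForm S w) {k m : ℕ} (hσ : (wordSphere S k).ncard ≤ m) (hm : 0 < m)
    (h8 : 8 * m ≤ k) (hk : 2 * k ≤ w.length) :
    ∃ e, 0 < e ∧ e ≤ m ∧ HasPeriodOn (fun t => w[t]?) e m (w.length - m) :=
  HasPeriodOn.of_windows (by omega) (by omega) fun _ hi => hw.hasPeriodOn_window hgen hS hσ hi

theorem IsNormalForm.eq_of_take_eq_of_drop_eq [LinearOrder G] (hS : S.Finite) {w₁ w₂ : List G}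
    (hw₁ : IsNormalForm S w₁) (hw₂ : IsNormalForm S w₂) {k m n : ℕ}
    (hσ : (wordSphere S k).ncard ≤ m) (hm : 0 < m) (h8 : 8 * m ≤ k) (hk : 2 * k ≤ n)
    (hlen₁ : w₁.length = n) (hlen₂ : w₂.length = n)
    (htake : w₁.take (4 * m) = w₂.take (4 * m))
    (hdrop : w₁.drop (n - 4 * m) = w₂.drop (n - 4 * m)) : w₁ = w₂ := by
  obtain ⟨e₁, he₁, he₁m, hp₁⟩ := hw₁.hasPeriodOn hgen hS hσ hm h8 (by omega)
  obtain ⟨e₂, he₂, he₂m, hp₂⟩ := hw₂.hasPeriodOn hgen hS hσ hm h8 (by omega)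
  rw [hlen₁] at hp₁
  rw [hlen₂] at hp₂
  have hagree := hp₁.eqOn_of_eqOn_ends (by omega) hp₂ he₁ he₁m he₂ he₂m
    (fun i hi => by simpa [List.getElem?_take_of_lt hi] using congrArg (·[i]?) htake)
    (fun i hi _ => by
      simpa [List.getElem?_drop, show n - 4 * m + (i - (n - 4 * m)) = i by omega] using
        congrArg (·[i - (n - 4 * m)]?) hdrop)
  refine List.ext_getElem? fun i => ?_
  by_cases hi : i < n
  · exact hagree i hi
  · rw [List.getElem?_eq_none (by omega), List.getElem?_eq_none (by omega)]

theorem ncard_wordSphere_le (hS : S.Finite) {k m n : ℕ} (hσ : (wordSphere S k).ncard ≤ m)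
    (hm : 0 < m) (h8 : 8 * m ≤ k) (hk : 2 * k ≤ n) :
    (wordSphere S n).ncard ≤ (wordBall S k).ncard ^ 2 := by
  let _ : LinearOrder G := IsWellOrder.linearOrder WellOrderingRel
  choose nf hnf hprod using exists_isNormalForm hgen hS
  have hlen : ∀ g ∈ wordSphere S n, (nf g).length = n := fun g hg => by
    rw [(hnf g).1.2, hprod g]
    exact hg
  have hball : ∀ g, ∀ v, v <:+: nf g → v.length ≤ k → v.prod ∈ wordBall S k := fun g v hv hvk =>
    mem_wordBall_natCast.2 <| (wordLength_prod_le_length ((hnf g).infix hgen hv).1.1).trans hvk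
  let Φ : G → G × G := fun g => (((nf g).take (4 * m)).prod, ((nf g).drop (n - 4 * m)).prod)
  have hmaps : Set.MapsTo Φ (wordSphere S n) (wordBall S k ×ˢ wordBall S k) := fun g hg =>
    ⟨hball g _ (List.take_prefix _ _).isInfix ((List.length_take_le _ _).trans (by omega)),
      hball g _ (List.drop_suffix _ _).isInfix
        (by rw [List.length_drop, hlen g hg]; omega)⟩
  have hinj : Set.InjOn Φ (wordSphere S n) := fun g₁ hg₁ g₂ hg₂ hΦ => by
    have hnfeq {v₁ v₂} (h₁ : v₁ <:+: nf g₁) (h₂ : v₂ <:+: nf g₂) (h : v₁.prod = v₂.prod) :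
        v₁ = v₂ := ((hnf g₁).infix hgen h₁).eq_of_prod_eq ((hnf g₂).infix hgen h₂) h
    rw [← hprod g₁, ← hprod g₂, (hnf g₁).eq_of_take_eq_of_drop_eq hgen hS (hnf g₂) hσ hm h8 hk
      (hlen g₁ hg₁) (hlen g₂ hg₂)
      (hnfeq (List.take_prefix _ _).isInfix (List.take_prefix _ _).isInfix (congrArg Prod.fst hΦ))
      (hnfeq (List.drop_suffix _ _).isInfix (List.drop_suffix _ _).isInfix (congrArg Prod.snd hΦ))]
  calc (wordSphere S n).ncard ≤ (wordBall S k ×ˢ wordBall S k).ncard :=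
        Set.ncard_le_ncard_of_injOn Φ hmaps hinj
          ((finite_wordBall hgen hS k).prod (finite_wordBall hgen hS k))
    _ = (wordBall S k).ncard ^ 2 := by rw [Set.ncard_prod, sq]

theorem ncard_wordBall_succ (hS : S.Finite) (n : ℕ) :
    (wordBall S (n + 1 : ℕ)).ncard = (wordBall S n).ncard + (wordSphere S (n + 1)).ncard := by
  have hunion : wordBall S (n + 1 : ℕ) = wordBall S n ∪ wordSphere S (n + 1) := by
    ext g
    simp only [Set.mem_union, mem_wordBall_natCast, mem_wordSphere]
    omega
  rw [hunion, Set.ncard_union_eq _ (finite_wordBall hgen hS n) (finite_wordSphere hgen hS _)]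
  exact Set.disjoint_left.2 fun g hg hg' => by
    simp only [mem_wordBall_natCast, mem_wordSphere] at hg hg'
    omega

theorem ncard_wordBall_mono (hS : S.Finite) {a b : ℕ} (hab : a ≤ b) :
    (wordBall S a).ncard ≤ (wordBall S b).ncard :=
  Set.ncard_le_ncard (fun _ hg => mem_wordBall_natCast.2 ((mem_wordBall_natCast.1 hg).trans hab))
    (finite_wordBall hgen hS b)

theorem ncard_wordBall_le_linear (hS : S.Finite) {k m : ℕ} (hσ : (wordSphere S k).ncard ≤ m)
    (hm : 0 < m) (h8 : 8 * m ≤ k) (n : ℕ) :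
    (wordBall S n).ncard ≤ (wordBall S (2 * k : ℕ)).ncard + n * (wordBall S k).ncard ^ 2 := by
  induction n with
  | zero => exact (ncard_wordBall_mono hgen hS (Nat.zero_le _)).trans (Nat.le_add_right _ _)
  | succ n ih =>
    by_cases hn : n + 1 ≤ 2 * k
    · exact (ncard_wordBall_mono hgen hS hn).trans (Nat.le_add_right _ _)
    rw [ncard_wordBall_succ hgen hS, add_one_mul]
    have := ncard_wordSphere_le hgen hS hσ hm h8 (n := n + 1) (by omega)
    omega

theorem wordSphere_nonempty [Infinite G] (hS : S.Finite) (n : ℕ) : (wordSphere S n).Nonempty := by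
  obtain ⟨g, hg⟩ := (finite_wordBall hgen hS n).infinite_compl.nonempty
  obtain ⟨w, hw, rfl⟩ := exists_isGeodesic hgen g
  have hn : n ≤ w.length := by
    rw [hw.2]
    exact (lt_of_not_ge (mt mem_wordBall_natCast.2 hg)).le
  refine ⟨(w.take n).prod, ?_⟩
  rw [mem_wordSphere, ← (hw.infix hgen (List.take_prefix n w).isInfix).2, List.length_take]
  omega

theorem lt_eight_mul_ncard_wordSphere (hS : S.Finite)
    (hgrowth : Tendsto (fun n : ℕ => ((wordBall S n).ncard : ℝ) / n) atTop atTop)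
    (k : ℕ) : k < 8 * (wordSphere S k).ncard := by
  have : Infinite G := infinite_of_tendsto_ncard_div_atTop hgrowth
  have hm : 0 < (wordSphere S k).ncard :=
    (Set.ncard_pos (finite_wordSphere hgen hS k)).2 (wordSphere_nonempty hgen hS k)
  by_contra! h8
  exact not_tendsto_natCast_div_atTop_of_le_add_mul
    (ncard_wordBall_le_linear hgen hS le_rfl hm h8) hgrowth

theorem sq_le_sixteen_mul_ncard_wordBall (hS : S.Finite)
    (hgrowth : Tendsto (fun n : ℕ => ((wordBall S n).ncard : ℝ) / n) atTop atTop) (n : ℕ) :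
    n ^ 2 ≤ 16 * (wordBall S n).ncard := by
  induction n with
  | zero => simp
  | succ n ih =>
    have := lt_eight_mul_ncard_wordSphere hgen hS hgrowth (n + 1)
    rw [ncard_wordBall_succ hgen hS]
    nlinarith

end Growth

section Nets

omit hgen in
theorem _root_.IsFolner.ncard_mul_le {ε r : ℝ} {F : Set G} (h : IsFolner S ε r F) :
    ((wordBall S r * F).ncard : ℝ) ≤ (1 + ε) * F.ncard := by
  have : ((wordBall S r * F).ncard : ℝ) ≤ ((wordBall S r * F) \ F).ncard + F.ncard := by
    exact_mod_cast Set.ncard_le_ncard_sdiff_add_ncard _ _ h.1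
  linarith [h.2.2]

variable (hSsym : ∀ s ∈ S, s⁻¹ ∈ S)
include hSsym

theorem exists_separated_dense_finset {F : Set G} (hF : F.Finite) {δ : ℝ} (hδ : 0 ≤ δ) :
    ∃ V : Finset G, ↑V ⊆ F ∧ (V : Set G).Pairwise (fun u v => ¬(wordDist S u v : ℝ) ≤ δ) ∧
      ∀ a ∈ F, ∃ v ∈ V, (wordDist S a v : ℝ) ≤ δ := by
  obtain ⟨V, hVF, hsep, hdense⟩ := hF.toFinset.exists_independent_dominating_subset
    (R := fun a b => (wordDist S a b : ℝ) ≤ δ) (fun a => by simpa [wordDist])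
    (fun a b h => wordDist_comm hgen hSsym a b ▸ h)
  exact ⟨V, fun v hv => hF.mem_toFinset.1 (hVF hv), hsep,
    fun a ha => hdense a (hF.mem_toFinset.2 ha)⟩

theorem card_mul_ncard_wordBall_le (hS : S.Finite) {F : Set G} (hF : F.Finite) {V : Finset G}
    {ρ : ℕ} (hVF : ↑V ⊆ F)
    (hsep : (V : Set G).Pairwise fun u v => ¬(wordDist S u v : ℝ) ≤ 2 * ρ) :
    V.card * (wordBall S ρ).ncard ≤ (wordBall S ρ * F).ncard := by
  have hinj : Set.InjOn (fun p : G × G => p.2 * p.1) (↑V ×ˢ wordBall S ρ) := by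
    rintro ⟨v, b⟩ ⟨hv, hb⟩ ⟨v', b'⟩ ⟨hv', hb'⟩ (h : b * v = b' * v')
    have hvv' : v = v' := by
      by_contra hne
      refine hsep hv hv' hne ?_
      have : v * v'⁻¹ = b⁻¹ * b' := by
        rw [← inv_mul_cancel_left b v, h]
        group
      rw [wordDist, this]
      norm_cast
      refine (wordLength_mul_le hgen _ _).trans ?_
      rw [wordLength_inv hgen hSsym]
      exact Nat.two_mul ρ ▸
        Nat.add_le_add (mem_wordBall_natCast.1 hb) (mem_wordBall_natCast.1 hb')
    subst hvv'
    simp only [Prod.mk.injEq, true_and]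
    exact mul_right_cancel h
  calc V.card * (wordBall S ρ).ncard = ((V : Set G) ×ˢ wordBall S ρ).ncard := by
        rw [Set.ncard_prod, Set.ncard_coe_finset]
    _ ≤ (wordBall S ρ * F).ncard :=
        Set.ncard_le_ncard_of_injOn _ (fun p hp => Set.mul_mem_mul hp.2 (hVF hp.1)) hinj
          ((finite_wordBall hgen hS ρ).mul hF)

theorem card_mul_sq_le_of_isFolner (hS : S.Finite)
    (hgrowth : Tendsto (fun n : ℕ => ((wordBall S n).ncard : ℝ) / n) atTop atTop) {ε r : ℝ}
    (hr : 0 ≤ r) {F : Set G} (hF : IsFolner S ε r F) {V : Finset G} (hVF : ↑V ⊆ F)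
    (hsep : (V : Set G).Pairwise fun u v => ¬(wordDist S u v : ℝ) ≤ 2 * ⌊r⌋₊) :
    (V.card : ℝ) * ⌊r⌋₊ ^ 2 ≤ 16 * ((1 + ε) * F.ncard) := by
  have hball : (V.card : ℝ) * (wordBall S ⌊r⌋₊).ncard ≤ (wordBall S ⌊r⌋₊ * F).ncard := by
    exact_mod_cast card_mul_ncard_wordBall_le hgen hSsym hS hF.1 hVF hsep
  have hquad : (⌊r⌋₊ : ℝ) ^ 2 ≤ 16 * (wordBall S ⌊r⌋₊).ncard := by
    exact_mod_cast sq_le_sixteen_mul_ncard_wordBall hgen hS hgrowth _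
  have hfol := hF.ncard_mul_le
  rw [wordBall_eq_natFloor hr] at hfol
  calc (V.card : ℝ) * ⌊r⌋₊ ^ 2 ≤ V.card * (16 * (wordBall S ⌊r⌋₊).ncard) := by gcongr
    _ = 16 * (V.card * (wordBall S ⌊r⌋₊).ncard) := by ring
    _ ≤ 16 * ((1 + ε) * F.ncard) := by linarith

theorem _root_.RConnected.of_dense {F V : Set G} {t δ : ℝ} (hF : RConnected S t F) (ht : 0 ≤ t)
    (hVF : V ⊆ F) (hdense : ∀ a ∈ F, ∃ v ∈ V, (wordDist S a v : ℝ) ≤ δ) :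
    RConnected S (2 * δ + t) V := by
  have hdist : ∀ a b c : G, (wordDist S a c : ℝ) ≤ wordDist S b a + wordDist S b c :=
    fun a b c => by
      rw [wordDist_comm hgen hSsym b a]
      exact_mod_cast wordDist_triangle hgen a b c
  have key : ∀ x y, Relation.ReflTransGen (fun a b => a ∈ F ∧ b ∈ F ∧ (wordDist S a b : ℝ) ≤ t)
      x y → ∀ u ∈ V, (wordDist S x u : ℝ) ≤ δ → ∀ v ∈ V, (wordDist S y v : ℝ) ≤ δ →
      Relation.ReflTransGen (fun a b => a ∈ V ∧ b ∈ V ∧ (wordDist S a b : ℝ) ≤ 2 * δ + t) u v := by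
    intro x y hxy
    induction hxy using Relation.ReflTransGen.head_induction_on with
    | refl =>
      intro u hu hyu v hv hyv
      exact .single ⟨hu, hv, by linarith [hdist u y v]⟩
    | @head x x' hstep _ ih =>
      intro u hu hxu v hv hyv
      obtain ⟨u', hu', hxu'⟩ := hdense x' hstep.2.1
      refine .head ⟨hu, hu', ?_⟩ (ih u' hu' hxu' v hv hyv)
      have : (wordDist S x u' : ℝ) ≤ wordDist S x x' + wordDist S x' u' := by
        exact_mod_cast wordDist_triangle hgen x x' u'
      linarith [hdist u x u', hstep.2.2]
  intro u hu v hv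
  have hδ : 0 ≤ δ := let ⟨_, _, h⟩ := hdense u (hVF hu); (Nat.cast_nonneg _).trans h
  exact key u v (hF u (hVF hu) v (hVF hv)) u hu (by simpa [wordDist]) v hv (by simpa [wordDist])

end Nets

end WordMetric

theorem stmt13 {G : Type*} [Group G] (S : Set G) (hSfin : S.Finite)
    (hSsym : ∀ s ∈ S, s⁻¹ ∈ S) (hSgen : Subgroup.closure S = ⊤)
    -- super-linear growth
    (hgrowth : Tendsto (fun n : ℕ => (((wordBall S n).ncard : ℝ) / (n : ℝ))) atTop atTop) :
    ∃ c : ℝ, ∀ r : ℝ, 1 ≤ r → ∀ F : Set G,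
      IsFolner S 1 r F → RConnected S 1 F →
      ∀ A : Set G, A ⊆ F → A.Nonempty →
      -- there is a connected graph (V, E) with V finite, (4r)-dense in A,
      -- of d_G-weight at most c|F|/r
      ∃ (V : Finset G) (E : Finset (G × G)),
        (∀ e ∈ E, e.1 ∈ V ∧ e.2 ∈ V) ∧
        (∀ a ∈ A, ∃ v ∈ V, (wordDist S a v : ℝ) ≤ 4 * r) ∧
        (∀ u ∈ V, ∀ v ∈ V, Relation.ReflTransGen (edgeStep E) u v) ∧
        (∑ e ∈ E, (wordDist S e.1 e.2 : ℝ)) ≤ c * (F.ncard : ℝ) / r := by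
  have hgen := WordMetric.submonoid_closure_eq_top hSsym hSgen
  refine ⟨640, fun r hr F hFol hFconn A hAF ⟨a, ha⟩ => ?_⟩
  set ρ := ⌊r⌋₊
  have hρ : (1 : ℝ) ≤ ρ := by exact_mod_cast Nat.one_le_floor_iff _ |>.2 hr
  have hρr : (ρ : ℝ) ≤ r := Nat.floor_le (by linarith)
  have hrρ : r ≤ 2 * ρ := by linarith [Nat.lt_floor_add_one r]
  obtain ⟨V, hVF, hVsep, hVdense⟩ :=
    WordMetric.exists_separated_dense_finset hgen hSsym hFol.1 (δ := 2 * ρ) (by positivity)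
  obtain ⟨E, hE, hEcard, hEconn⟩ := exists_spanning_edges
    (fun a b h => (WordMetric.wordDist_comm hgen hSsym b a) ▸ h)
    (let ⟨v, hv, _⟩ := hVdense a (hAF ha); ⟨v, hv⟩)
    (hFconn.of_dense hgen hSsym zero_le_one hVF hVdense)
  have hcount := WordMetric.card_mul_sq_le_of_isFolner hgen hSsym hSfin hgrowth (by linarith)
    hFol hVF hVsep
  have hweight : ∑ e ∈ E, (wordDist S e.1 e.2 : ℝ) ≤ 2 * V.card * (2 * (2 * ρ) + 1) :=
    (Finset.sum_le_card_nsmul _ _ _ fun e he => (hE e he).2.2).trans <| by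
      rw [nsmul_eq_mul]
      gcongr
      exact_mod_cast hEcard
  refine ⟨V, E, fun e he => ⟨(hE e he).1, (hE e he).2.1⟩, fun a ha => ?_, hEconn, ?_⟩
  · obtain ⟨v, hv, h⟩ := hVdense a (hAF ha)
    exact ⟨v, hv, by linarith⟩
  rw [le_div_iff₀ (by linarith)]
  calc (∑ e ∈ E, (wordDist S e.1 e.2 : ℝ)) * r ≤ 2 * V.card * (2 * (2 * ρ) + 1) * (2 * ρ) :=
        mul_le_mul hweight hrρ (by linarith) (by positivity)
    _ ≤ 640 * F.ncard := by nlinarith [(by positivity : (0 : ℝ) ≤ V.card)]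
end
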